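/- arXiv:hep-th/9201051 — 8 statements merged into one kernel-verified Lean document; each statement's English description precedes it below -/
import Mathlib

section
/- Assume additionally that g = h ⊕ m is a B-orthogonal direct sum of linear subspaces with [h,h] ⊆ h, [h,m] ⊆ m, [m,m] ⊆ h, let π_m be the projection onto m along h, and set P = Σ_i π_m(e_i) ⊗ e^i ∈ U(g) ⊗ U(g). Then for every x ∈ m: [C, x⊗1] = [P, x⊗1 − 1⊗x] in U(g) ⊗ U(g). -/
/-!
Each bracket acts on one tensor factor at a time, so the identity already holds in `g ⊗ g`, where
it reads `Σ [e_i, x] ⊗ e^i = Σ ([π_m e_i, x] ⊗ e^i - π_m e_i ⊗ [e^i, x])`. If `f` and `g` are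
`B`-adjoint, then `Σ f(e_i) ⊗ e^i = Σ e_i ⊗ g(e^i)`. By invariance `[·, x]` is adjoint to
`[x, ·]`, and by orthogonality `π_m` is self-adjoint, so every term can be rewritten as
`Σ e_i ⊗ φ(e^i)`, and the identity reduces to `[x, v] = π_m [x, v] + [x, π_m v]` for `x ∈ m`.
This splitting holds because `[x, h] ⊆ m` and `[x, m] ⊆ h`.
-/

open scoped TensorProduct

noncomputable section

def pairTensor (K : Type*) {L I : Type*} [Field K] [LieRing L] [LieAlgebra K L]
    [Fintype I] (u v : I → L) :
    UniversalEnvelopingAlgebra K L ⊗[K] UniversalEnvelopingAlgebra K L :=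
  ∑ i, UniversalEnvelopingAlgebra.ι K (u i) ⊗ₜ[K] UniversalEnvelopingAlgebra.ι K (v i)

namespace LinearMap.BilinForm

variable {K L N ι : Type*} [CommRing K] [AddCommGroup L] [Module K L] [AddCommGroup N]
  [Module K N] [Fintype ι] [DecidableEq ι] {B : LinearMap.BilinForm K L}
  {e : Module.Basis ι K L} {e' : ι → L}

theorem apply_dual_eq_repr (hdual : ∀ i j, B (e i) (e' j) = if i = j then 1 else 0)
    (v : L) (j : ι) : B v (e' j) = e.repr v j := by
  conv_lhs => rw [← e.sum_repr v]
  simp only [map_sum, map_smul, LinearMap.sum_apply, LinearMap.smul_apply, hdual, smul_eq_mul,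
    mul_ite, mul_one, mul_zero, Finset.sum_ite_eq', Finset.mem_univ, if_true]

theorem sum_apply_dual_smul (hdual : ∀ i j, B (e i) (e' j) = if i = j then 1 else 0)
    (v : L) : ∑ j, B v (e' j) • e j = v := by
  simp_rw [apply_dual_eq_repr hdual]
  exact e.sum_repr v

theorem sum_apply_smul_dual (hdual : ∀ i j, B (e i) (e' j) = if i = j then 1 else 0)
    (hB : B.SeparatingRight) (w : L) : ∑ i, B (e i) w • e' i = w := by
  rw [← sub_eq_zero]
  refine hB _ fun v => ?_
  have hv : B v w = ∑ i, e.repr v i * B (e i) w := by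
    conv_lhs => rw [← e.sum_repr v]
    simp only [map_sum, map_smul, LinearMap.sum_apply, LinearMap.smul_apply, smul_eq_mul]
  simp [apply_dual_eq_repr hdual, hv, mul_comm]

theorem sum_tmul_dual_eq_of_isAdjointPair
    (hdual : ∀ i j, B (e i) (e' j) = if i = j then 1 else 0) (hB : B.SeparatingRight)
    {f g : L → L} (hfg : B.IsAdjointPair B f g) (h : L →ₗ[K] N) :
    ∑ i, f (e i) ⊗ₜ[K] h (e' i) = ∑ i, e i ⊗ₜ[K] h (g (e' i)) :=
  calc ∑ i, f (e i) ⊗ₜ[K] h (e' i)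
      = ∑ i, ∑ j, B (e i) (g (e' j)) • (e j ⊗ₜ[K] h (e' i)) := by
        refine Finset.sum_congr rfl fun i _ => ?_
        conv_lhs => rw [← sum_apply_dual_smul hdual (f (e i))]
        simp [TensorProduct.sum_tmul, hfg _ _, TensorProduct.smul_tmul']
    _ = ∑ j, e j ⊗ₜ[K] h (∑ i, B (e i) (g (e' j)) • e' i) := by
        rw [Finset.sum_comm]
        simp [TensorProduct.tmul_sum, TensorProduct.tmul_smul]
    _ = ∑ i, e i ⊗ₜ[K] h (g (e' i)) := by
        simp_rw [sum_apply_smul_dual hdual hB]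

end LinearMap.BilinForm

section Projection

variable {K L : Type*} [CommRing K] [AddCommGroup L] [Module K L] {H M : Submodule K L}
  {π : L →ₗ[K] L}

theorem sub_projection_mem (hHM : Codisjoint H M) (hπM : ∀ x ∈ M, π x = x)
    (hπH : ∀ x ∈ H, π x = 0) (v : L) : v - π v ∈ H := by
  obtain ⟨a, b, ha, hb, rfl⟩ := Submodule.codisjoint_iff_exists_add_eq.mp hHM v
  simpa [hπH a ha, hπM b hb] using ha

theorem isAdjointPair_projection {B : LinearMap.BilinForm K L} (hBsymm : ∀ x y, B x y = B y x)
    (horth : ∀ x ∈ H, ∀ y ∈ M, B x y = 0) (hπ : ∀ x, π x ∈ M) (hker : ∀ v, v - π v ∈ H) :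
    B.IsAdjointPair B π π := by
  intro a b
  have ha := horth _ (hker a) _ (hπ b)
  have hb := horth _ (hker b) _ (hπ a)
  rw [hBsymm] at hb
  simp only [map_sub, LinearMap.sub_apply] at ha hb
  linear_combination hb - ha

end Projection

theorem lie_eq_projection_lie_add_lie_projection {K L : Type*} [CommRing K] [LieRing L]
    [LieAlgebra K L] {H M : Submodule K L} {π : L →ₗ[K] L}
    (hHM : ∀ x ∈ H, ∀ y ∈ M, ⁅x, y⁆ ∈ M) (hMM : ∀ x ∈ M, ∀ y ∈ M, ⁅x, y⁆ ∈ H)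
    (hπ : ∀ x, π x ∈ M) (hπM : ∀ x ∈ M, π x = x) (hπH : ∀ x ∈ H, π x = 0)
    (hker : ∀ v, v - π v ∈ H) {x : L} (hx : x ∈ M) (v : L) :
    ⁅x, v⁆ = π ⁅x, v⁆ + ⁅x, π v⁆ := by
  have hH : π ⁅x, π v⁆ = 0 := hπH _ (hMM x hx _ (hπ v))
  have hM : π ⁅x, v - π v⁆ = ⁅x, v - π v⁆ :=
    hπM _ (by rw [← lie_skew]; exact M.neg_mem (hHM _ (hker v) x hx))
  rw [lie_sub, map_sub, hH, sub_zero] at hM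
  rw [hM, sub_add_cancel]

theorem sum_lie_tmul_dual_eq {K L ι : Type*} [CommRing K] [LieRing L] [LieAlgebra K L]
    [Fintype ι] [DecidableEq ι] {B : LinearMap.BilinForm K L} {e : Module.Basis ι K L}
    {e' : ι → L} (hdual : ∀ i j, B (e i) (e' j) = if i = j then 1 else 0)
    (hB : B.SeparatingRight) (hBinv : ∀ x y z, B ⁅x, y⁆ z = B x ⁅y, z⁆) {π : L →ₗ[K] L}
    (hπ : B.IsAdjointPair B π π) {x : L} (hsplit : ∀ v, ⁅x, v⁆ = π ⁅x, v⁆ + ⁅x, π v⁆) :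
    ∑ i, ⁅e i, x⁆ ⊗ₜ[K] e' i = ∑ i, (⁅π (e i), x⁆ ⊗ₜ[K] e' i - π (e i) ⊗ₜ[K] ⁅e' i, x⁆) := by
  have had : B.IsAdjointPair B (⁅·, x⁆) (⁅x, ·⁆) := fun a b => hBinv a x b
  have h₁ := LinearMap.BilinForm.sum_tmul_dual_eq_of_isAdjointPair hdual hB had LinearMap.id
  have h₂ := LinearMap.BilinForm.sum_tmul_dual_eq_of_isAdjointPair hdual hB (hπ.comp had)
    LinearMap.id
  have h₃ := LinearMap.BilinForm.sum_tmul_dual_eq_of_isAdjointPair hdual hB hπ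
    (LieAlgebra.ad K L x)
  simp only [LinearMap.id_apply, LieAlgebra.ad_apply, Function.comp_apply] at h₁ h₂ h₃
  simp_rw [sub_eq_add_neg, ← TensorProduct.tmul_neg, lie_skew]
  rw [Finset.sum_add_distrib, h₁, h₂, h₃, ← Finset.sum_add_distrib]
  simp_rw [← TensorProduct.tmul_add, ← hsplit]

namespace Algebra.TensorProduct

variable {R A B : Type*} [CommRing R] [Ring A] [Algebra R A] [Ring B] [Algebra R B]

theorem tmul_lie_tmul_one (a c : A) (b : B) : ⁅a ⊗ₜ[R] b, c ⊗ₜ[R] (1 : B)⁆ = ⁅a, c⁆ ⊗ₜ b := by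
  simp only [Ring.lie_def, tmul_mul_tmul, mul_one, one_mul, TensorProduct.sub_tmul]

theorem tmul_lie_one_tmul (a : A) (b c : B) : ⁅a ⊗ₜ[R] b, (1 : A) ⊗ₜ[R] c⁆ = a ⊗ₜ ⁅b, c⁆ := by
  simp only [Ring.lie_def, tmul_mul_tmul, mul_one, one_mul, TensorProduct.tmul_sub]

end Algebra.TensorProduct

section PairTensor

open UniversalEnvelopingAlgebra

variable {K L I : Type*} [Field K] [LieRing L] [LieAlgebra K L] [Fintype I]

/- `sum_lie` and `lie_sub` do not fire on `U(g) ⊗ U(g)`: its Lie ring structure comes from the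
ring structure, whose addition is not reducibly that of the tensor product, hence `Ring.lie_def`. -/
theorem lie_pairTensor_tmul_one (u v : I → L) (x : L) :
    ⁅pairTensor K u v, ι K x ⊗ₜ[K] 1⁆ = ∑ i, ι K ⁅u i, x⁆ ⊗ₜ[K] ι K (v i) := by
  rw [pairTensor, Ring.lie_def, Finset.sum_mul, Finset.mul_sum, ← Finset.sum_sub_distrib]
  simp only [← Ring.lie_def, Algebra.TensorProduct.tmul_lie_tmul_one, LieHom.map_lie]

theorem lie_pairTensor_one_tmul (u v : I → L) (x : L) :
    ⁅pairTensor K u v, 1 ⊗ₜ[K] ι K x⁆ = ∑ i, ι K (u i) ⊗ₜ[K] ι K ⁅v i, x⁆ := by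
  rw [pairTensor, Ring.lie_def, Finset.sum_mul, Finset.mul_sum, ← Finset.sum_sub_distrib]
  simp only [← Ring.lie_def, Algebra.TensorProduct.tmul_lie_one_tmul, LieHom.map_lie]

theorem lie_pairTensor_tmul_one_sub_one_tmul (u v : I → L) (x : L) :
    ⁅pairTensor K u v, ι K x ⊗ₜ[K] 1 - 1 ⊗ₜ[K] ι K x⁆
      = ∑ i, (ι K ⁅u i, x⁆ ⊗ₜ[K] ι K (v i) - ι K (u i) ⊗ₜ[K] ι K ⁅v i, x⁆) := by
  rw [Ring.lie_def, mul_sub, sub_mul, sub_sub_sub_comm, ← Ring.lie_def, ← Ring.lie_def,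
    lie_pairTensor_tmul_one, lie_pairTensor_one_tmul, Finset.sum_sub_distrib]

end PairTensor

theorem casimir_projection_identity_general
    {K L I : Type*} [Field K] [LieRing L] [LieAlgebra K L]
    [Fintype I] [DecidableEq I]
    (B : LinearMap.BilinForm K L)
    (hBsymm : ∀ x y, B x y = B y x)
    (hBinv : ∀ x y z, B ⁅x, y⁆ z = B x ⁅y, z⁆)
    (hBnd : B.Nondegenerate)
    (e : Module.Basis I K L) (e' : I → L)
    (hdual : ∀ i j, B (e i) (e' j) = if i = j then 1 else 0)
    (H M : Submodule K L) (hcompl : IsCompl H M)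
    (horth : ∀ x ∈ H, ∀ y ∈ M, B x y = 0)
    (hHM : ∀ x ∈ H, ∀ y ∈ M, ⁅x, y⁆ ∈ M)
    (hMM : ∀ x ∈ M, ∀ y ∈ M, ⁅x, y⁆ ∈ H)
    (πm : L →ₗ[K] L)
    (hπmM : ∀ x, πm x ∈ M) (hπmId : ∀ x ∈ M, πm x = x) (hπmH : ∀ x ∈ H, πm x = 0) :
    ∀ x ∈ M,
      ⁅pairTensor K (⇑e) e', UniversalEnvelopingAlgebra.ι K x ⊗ₜ[K] 1⁆
        = ⁅pairTensor K (fun i => πm (e i)) e',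
            UniversalEnvelopingAlgebra.ι K x ⊗ₜ[K] 1
              - 1 ⊗ₜ[K] UniversalEnvelopingAlgebra.ι K x⁆ := by
  intro x hx
  have hker := sub_projection_mem hcompl.codisjoint hπmId hπmH
  have key := sum_lie_tmul_dual_eq hdual hBnd.2 hBinv
    (isAdjointPair_projection hBsymm horth hπmM hker)
    (lie_eq_projection_lie_add_lie_projection hHM hMM hπmM hπmId hπmH hker hx)
  let ιₗ : L →ₗ[K] UniversalEnvelopingAlgebra K L := ↑(UniversalEnvelopingAlgebra.ι K (L := L))
  have hlift := congrArg (TensorProduct.map ιₗ ιₗ) key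
  simp only [map_sum, map_sub, TensorProduct.map_tmul] at hlift
  rwa [lie_pairTensor_tmul_one, lie_pairTensor_tmul_one_sub_one_tmul]

/-- Let `g` be finite-dimensional with nondegenerate symmetric invariant form `B`, Casimir
tensor `C = Σ i, e i ⊗ e' i`.  Assume `g = h ⊕ m` is a `B`-orthogonal direct sum with
`[h,h] ⊆ h`, `[h,m] ⊆ m`, `[m,m] ⊆ h`, let `πm` be the projection onto `m` along `h`, and
set `P = Σ i, πm (e i) ⊗ e' i`.  Then for every `x ∈ m`:
`[C, x⊗1] = [P, x⊗1 − 1⊗x]` in `U(g) ⊗ U(g)`. -/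
theorem casimir_projection_identity
    {K L I : Type*} [Field K] [CharZero K] [LieRing L] [LieAlgebra K L]
    [Module.Finite K L] [Fintype I] [DecidableEq I]
    (B : LinearMap.BilinForm K L)
    (hBsymm : ∀ x y, B x y = B y x)
    (hBinv : ∀ x y z, B ⁅x, y⁆ z = B x ⁅y, z⁆)
    (hBnd : B.Nondegenerate)
    (e : Module.Basis I K L) (e' : I → L)
    (hdual : ∀ i j, B (e i) (e' j) = if i = j then 1 else 0)
    (H M : Submodule K L) (hcompl : IsCompl H M)
    (horth : ∀ x ∈ H, ∀ y ∈ M, B x y = 0)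
    (hHH : ∀ x ∈ H, ∀ y ∈ H, ⁅x, y⁆ ∈ H)
    (hHM : ∀ x ∈ H, ∀ y ∈ M, ⁅x, y⁆ ∈ M)
    (hMM : ∀ x ∈ M, ∀ y ∈ M, ⁅x, y⁆ ∈ H)
    (πm : L →ₗ[K] L)
    (hπmM : ∀ x, πm x ∈ M) (hπmId : ∀ x ∈ M, πm x = x) (hπmH : ∀ x ∈ H, πm x = 0) :
    ∀ x ∈ M,
      ⁅pairTensor K (⇑e) e', UniversalEnvelopingAlgebra.ι K x ⊗ₜ[K] 1⁆
        = ⁅pairTensor K (fun i => πm (e i)) e',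
            UniversalEnvelopingAlgebra.ι K x ⊗ₜ[K] 1
              - 1 ⊗ₜ[K] UniversalEnvelopingAlgebra.ι K x⁆ :=
  casimir_projection_identity_general B hBsymm hBinv hBnd e e' hdual H M hcompl horth hHM hMM πm
    hπmM hπmId hπmH
end
end

section
/- In U(g)^{⊗3}: [σ̂_{12}, σ̂_{13}] = −[σ̂_{12}, C_{23}]. -/
open scoped TensorProduct

noncomputable section

/-- `Σ i, u i ⊗ v i ⊗ 1` in `U(g)⊗U(g)⊗U(g)`: the tensor with factors in positions 1, 2. -/
def tensor12 (K : Type*) {L I : Type*} [Field K] [LieRing L] [LieAlgebra K L]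
    [Fintype I] (u v : I → L) :
    UniversalEnvelopingAlgebra K L ⊗[K]
      (UniversalEnvelopingAlgebra K L ⊗[K] UniversalEnvelopingAlgebra K L) :=
  ∑ i, UniversalEnvelopingAlgebra.ι K (u i) ⊗ₜ[K]
        (UniversalEnvelopingAlgebra.ι K (v i) ⊗ₜ[K] 1)

/-- `Σ i, u i ⊗ 1 ⊗ v i`: the tensor with factors in positions 1, 3. -/
def tensor13 (K : Type*) {L I : Type*} [Field K] [LieRing L] [LieAlgebra K L]
    [Fintype I] (u v : I → L) :
    UniversalEnvelopingAlgebra K L ⊗[K]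
      (UniversalEnvelopingAlgebra K L ⊗[K] UniversalEnvelopingAlgebra K L) :=
  ∑ i, UniversalEnvelopingAlgebra.ι K (u i) ⊗ₜ[K]
        ((1 : UniversalEnvelopingAlgebra K L) ⊗ₜ[K] UniversalEnvelopingAlgebra.ι K (v i))

/-- `Σ i, 1 ⊗ u i ⊗ v i`: the tensor with factors in positions 2, 3. -/
def tensor23 (K : Type*) {L I : Type*} [Field K] [LieRing L] [LieAlgebra K L]
    [Fintype I] (u v : I → L) :
    UniversalEnvelopingAlgebra K L ⊗[K]
      (UniversalEnvelopingAlgebra K L ⊗[K] UniversalEnvelopingAlgebra K L) :=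
  ∑ i, (1 : UniversalEnvelopingAlgebra K L) ⊗ₜ[K]
        (UniversalEnvelopingAlgebra.ι K (u i) ⊗ₜ[K] UniversalEnvelopingAlgebra.ι K (v i))

/-!
Both brackets are computed termwise in `U(g)^{⊗3}`: since `σ` is a Lie algebra morphism,
`[σ̂₁₂, σ̂₁₃] = Σ_{i,j} σ[eᵢ, eⱼ] ⊗ eⁱ ⊗ eʲ` and `[σ̂₁₂, C₂₃] = Σ_{i,j} σ(eᵢ) ⊗ [eⁱ, eⱼ] ⊗ eʲ`.
For fixed `j` the two inner sums are, up to sign, the images under `(σ ⊗ id) ⊗ eʲ` of the two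
sides of the invariance `Σᵢ [eᵢ, y] ⊗ eⁱ = Σᵢ eᵢ ⊗ [y, eⁱ]` of the Casimir tensor at `y = eⱼ`.
That invariance is an instance of `Σᵢ f(eᵢ) ⊗ eⁱ = Σᵢ eᵢ ⊗ g(eⁱ)` for any `B`-adjoint pair `(f, g)`,
here `f = [·, y]` and `g = ad y`, which are adjoint precisely by the invariance of `B`.
-/

section DualBases

variable {R M N I : Type*} [CommRing R] [AddCommGroup M] [Module R M] [AddCommGroup N] [Module R N]
  [Fintype I] [DecidableEq I] {B : M →ₗ[R] N →ₗ[R] R} {e : Module.Basis I R M} {e' : I → N}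

theorem sum_apply_dual_smul_basis
    (hdual : ∀ i j, B (e i) (e' j) = if i = j then 1 else 0) (x : M) :
    ∑ k, B x (e' k) • e k = x := by
  have hcoord : ∀ k, B.flip (e' k) = e.coord k := fun k =>
    e.ext fun i => by simp [hdual, Finsupp.single_apply]
  simp [← LinearMap.flip_apply (f := B), hcoord]

theorem sum_basis_apply_smul_dual (hB : B.SeparatingRight)
    (hdual : ∀ i j, B (e i) (e' j) = if i = j then 1 else 0) (y : N) :
    ∑ k, B (e k) y • e' k = y := by
  have hflip : B.flip (y - ∑ k, B (e k) y • e' k) = 0 :=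
    e.ext fun i => by simp [map_sum, hdual]
  exact (sub_eq_zero.mp (hB _ fun x => LinearMap.congr_fun hflip x)).symm

theorem sum_tmul_dual_eq_of_adjoint (hB : B.SeparatingRight)
    (hdual : ∀ i j, B (e i) (e' j) = if i = j then 1 else 0) {f : M →ₗ[R] M} {g : N →ₗ[R] N}
    (hfg : ∀ x y, B (f x) y = B x (g y)) :
    ∑ i, f (e i) ⊗ₜ[R] e' i = ∑ i, e i ⊗ₜ[R] g (e' i) := by
  calc ∑ i, f (e i) ⊗ₜ[R] e' i
      = ∑ i, ∑ k, B (e i) (g (e' k)) • (e k ⊗ₜ[R] e' i) := by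
        refine Finset.sum_congr rfl fun i _ => ?_
        conv_lhs => rw [← sum_apply_dual_smul_basis hdual (f (e i))]
        simp [TensorProduct.sum_tmul, TensorProduct.smul_tmul', hfg]
    _ = ∑ k, ∑ i, B (e i) (g (e' k)) • (e k ⊗ₜ[R] e' i) := Finset.sum_comm
    _ = ∑ k, e k ⊗ₜ[R] g (e' k) := by
        refine Finset.sum_congr rfl fun k _ => ?_
        conv_rhs => rw [← sum_basis_apply_smul_dual hB hdual (g (e' k))]
        simp [TensorProduct.tmul_sum, TensorProduct.tmul_smul]

end DualBases

section Commutators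

variable {R A : Type*} [CommRing R] [Ring A] [Algebra R A]

theorem lie_tmul_tmul_one_tmul_one_tmul (a b c d : A) :
    ⁅a ⊗ₜ[R] (b ⊗ₜ[R] (1 : A)), c ⊗ₜ[R] ((1 : A) ⊗ₜ[R] d)⁆ = ⁅a, c⁆ ⊗ₜ[R] (b ⊗ₜ[R] d) := by
  simp only [Ring.lie_def, Algebra.TensorProduct.tmul_mul_tmul, mul_one, one_mul,
    TensorProduct.sub_tmul]

theorem lie_tmul_tmul_one_one_tmul_tmul (a b c d : A) :
    ⁅a ⊗ₜ[R] (b ⊗ₜ[R] (1 : A)), (1 : A) ⊗ₜ[R] (c ⊗ₜ[R] d)⁆ = a ⊗ₜ[R] (⁅b, c⁆ ⊗ₜ[R] d) := by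
  simp only [Ring.lie_def, Algebra.TensorProduct.tmul_mul_tmul, mul_one, one_mul,
    TensorProduct.sub_tmul, TensorProduct.tmul_sub]

end Commutators

section LieBrackets

attribute [local instance 100] LieRing.ofAssociativeRing

theorem sum_lie_tmul_dual {K L I : Type*} [Field K] [LieRing L] [LieAlgebra K L] [Fintype I]
    [DecidableEq I] {B : LinearMap.BilinForm K L} (hB : B.SeparatingRight)
    (hBinv : ∀ x y z, B ⁅x, y⁆ z = B x ⁅y, z⁆) {e : Module.Basis I K L} {e' : I → L}
    (hdual : ∀ i j, B (e i) (e' j) = if i = j then 1 else 0) (y : L) :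
    ∑ i, ⁅e i, y⁆ ⊗ₜ[K] e' i = ∑ i, e i ⊗ₜ[K] ⁅y, e' i⁆ :=
  sum_tmul_dual_eq_of_adjoint hB hdual (f := (LieAlgebra.ad K L).toLinearMap.flip y)
    (g := LieAlgebra.ad K L y) fun x z => hBinv x y z

section Enveloping

open UniversalEnvelopingAlgebra

variable {K L I : Type*} [Field K] [LieRing L] [LieAlgebra K L] [Fintype I]

theorem lie_tensor12_tensor13 (u v u' v' : I → L) :
    ⁅tensor12 K u v, tensor13 K u' v'⁆
      = ∑ i, ∑ j, ι K ⁅u i, u' j⁆ ⊗ₜ[K] (ι K (v i) ⊗ₜ[K] ι K (v' j)) := by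
  simp only [tensor12, tensor13, sum_lie_sum, lie_tmul_tmul_one_tmul_one_tmul, LieHom.map_lie]

theorem lie_tensor12_tensor23 (u v u' v' : I → L) :
    ⁅tensor12 K u v, tensor23 K u' v'⁆
      = ∑ i, ∑ j, ι K (u i) ⊗ₜ[K] (ι K ⁅v i, u' j⁆ ⊗ₜ[K] ι K (v' j)) := by
  simp only [tensor12, tensor23, sum_lie_sum, lie_tmul_tmul_one_one_tmul_tmul, LieHom.map_lie]

theorem sum_ι_lie_tmul_tmul_dual [DecidableEq I] {B : LinearMap.BilinForm K L}
    (hB : B.SeparatingRight) (hBinv : ∀ x y z, B ⁅x, y⁆ z = B x ⁅y, z⁆)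
    {e : Module.Basis I K L} {e' : I → L}
    (hdual : ∀ i j, B (e i) (e' j) = if i = j then 1 else 0)
    (f : L →ₗ[K] L) (y : L) (w : UniversalEnvelopingAlgebra K L) :
    ∑ i, ι K (f ⁅e i, y⁆) ⊗ₜ[K] (ι K (e' i) ⊗ₜ[K] w)
      = ∑ i, ι K (f (e i)) ⊗ₜ[K] (ι K ⁅y, e' i⁆ ⊗ₜ[K] w) := by
  let Φ : L ⊗[K] L →ₗ[K] _ := TensorProduct.map ((ι K).toLinearMap ∘ₗ f)
    ((TensorProduct.mk K _ _).flip w ∘ₗ (ι K).toLinearMap)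
  simpa [Φ, map_sum] using congrArg Φ (sum_lie_tmul_dual hB hBinv hdual y)

end Enveloping

end LieBrackets

theorem sigma_sigma_braid_general
    {K L I : Type*} [Field K] [LieRing L] [LieAlgebra K L]
    [Fintype I] [DecidableEq I]
    (B : LinearMap.BilinForm K L)
    (hBinv : ∀ x y z, B ⁅x, y⁆ z = B x ⁅y, z⁆)
    (hBnd : B.Nondegenerate)
    (e : Module.Basis I K L) (e' : I → L)
    (hdual : ∀ i j, B (e i) (e' j) = if i = j then 1 else 0)
    (σ : L →ₗ[K] L)
    (hσlie : ∀ x y, σ ⁅x, y⁆ = ⁅σ x, σ y⁆) :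
    ⁅tensor12 K (fun i => σ (e i)) e', tensor13 K (fun i => σ (e i)) e'⁆
      = -⁅tensor12 K (fun i => σ (e i)) e', tensor23 K (⇑e) e'⁆ := by
  open UniversalEnvelopingAlgebra in
  calc _ = ∑ j, ∑ i, ι K (σ ⁅e i, e j⁆) ⊗ₜ[K] (ι K (e' i) ⊗ₜ[K] ι K (e' j)) := by
        rw [lie_tensor12_tensor13, Finset.sum_comm]
        simp only [hσlie]
    _ = ∑ j, ∑ i, ι K (σ (e i)) ⊗ₜ[K] (ι K ⁅e j, e' i⁆ ⊗ₜ[K] ι K (e' j)) :=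
        Finset.sum_congr rfl fun j _ => sum_ι_lie_tmul_tmul_dual hBnd.2 hBinv hdual σ (e j) _
    _ = _ := by
        rw [lie_tensor12_tensor23, Finset.sum_comm]
        have hskew : ∀ i j, ι K ⁅e' i, e j⁆ = -ι K ⁅e j, e' i⁆ := fun i j => by
          rw [← map_neg, lie_skew]
        simp only [hskew, TensorProduct.neg_tmul, TensorProduct.tmul_neg, Finset.sum_neg_distrib,
          neg_neg]

/-- For an involutive `B`-preserving automorphism `σ` with associated tensor
`σ̂ = Σ i, σ(e i) ⊗ e' i`, one has `[σ̂₁₂, σ̂₁₃] = −[σ̂₁₂, C₂₃]` in `U(g)^{⊗3}`. -/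
theorem sigma_sigma_braid
    {K L I : Type*} [Field K] [CharZero K] [LieRing L] [LieAlgebra K L]
    [Module.Finite K L] [Fintype I] [DecidableEq I]
    (B : LinearMap.BilinForm K L)
    (hBsymm : ∀ x y, B x y = B y x)
    (hBinv : ∀ x y z, B ⁅x, y⁆ z = B x ⁅y, z⁆)
    (hBnd : B.Nondegenerate)
    (e : Module.Basis I K L) (e' : I → L)
    (hdual : ∀ i j, B (e i) (e' j) = if i = j then 1 else 0)
    (σ : L →ₗ[K] L)
    (hσinv : ∀ x, σ (σ x) = x)
    (hσlie : ∀ x y, σ ⁅x, y⁆ = ⁅σ x, σ y⁆)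
    (hσB : ∀ x y, B (σ x) (σ y) = B x y) :
    ⁅tensor12 K (fun i => σ (e i)) e', tensor13 K (fun i => σ (e i)) e'⁆
      = -⁅tensor12 K (fun i => σ (e i)) e', tensor23 K (⇑e) e'⁆ :=
  sigma_sigma_braid_general B hBinv hBnd e e' hdual σ hσlie
end
end

section
/- In U(g)^{⊗4}: [[C_{13} + C_{14}, σ̂_{12}], C_{34}] = 0 and [[C_{23} + C_{24}, σ̂_{12}], C_{34}] = 0. -/
open scoped TensorProduct

noncomputable section

/-- `Σ i, u i ⊗ v i ⊗ 1 ⊗ 1` in `U(g)^{⊗4}`: factors in positions 1, 2. -/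
def tensor4_12 (K : Type*) {L I : Type*} [Field K] [LieRing L] [LieAlgebra K L]
    [Fintype I] (u v : I → L) :
    UniversalEnvelopingAlgebra K L ⊗[K] (UniversalEnvelopingAlgebra K L ⊗[K]
      (UniversalEnvelopingAlgebra K L ⊗[K] UniversalEnvelopingAlgebra K L)) :=
  ∑ i, UniversalEnvelopingAlgebra.ι K (u i) ⊗ₜ[K]
        (UniversalEnvelopingAlgebra.ι K (v i) ⊗ₜ[K]
          ((1 : UniversalEnvelopingAlgebra K L) ⊗ₜ[K] (1 : UniversalEnvelopingAlgebra K L)))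

/-- `Σ i, u i ⊗ 1 ⊗ v i ⊗ 1`: factors in positions 1, 3. -/
def tensor4_13 (K : Type*) {L I : Type*} [Field K] [LieRing L] [LieAlgebra K L]
    [Fintype I] (u v : I → L) :
    UniversalEnvelopingAlgebra K L ⊗[K] (UniversalEnvelopingAlgebra K L ⊗[K]
      (UniversalEnvelopingAlgebra K L ⊗[K] UniversalEnvelopingAlgebra K L)) :=
  ∑ i, UniversalEnvelopingAlgebra.ι K (u i) ⊗ₜ[K]
        ((1 : UniversalEnvelopingAlgebra K L) ⊗ₜ[K]
          (UniversalEnvelopingAlgebra.ι K (v i) ⊗ₜ[K] (1 : UniversalEnvelopingAlgebra K L)))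

/-- `Σ i, u i ⊗ 1 ⊗ 1 ⊗ v i`: factors in positions 1, 4. -/
def tensor4_14 (K : Type*) {L I : Type*} [Field K] [LieRing L] [LieAlgebra K L]
    [Fintype I] (u v : I → L) :
    UniversalEnvelopingAlgebra K L ⊗[K] (UniversalEnvelopingAlgebra K L ⊗[K]
      (UniversalEnvelopingAlgebra K L ⊗[K] UniversalEnvelopingAlgebra K L)) :=
  ∑ i, UniversalEnvelopingAlgebra.ι K (u i) ⊗ₜ[K]
        ((1 : UniversalEnvelopingAlgebra K L) ⊗ₜ[K]
          ((1 : UniversalEnvelopingAlgebra K L) ⊗ₜ[K] UniversalEnvelopingAlgebra.ι K (v i)))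

/-- `Σ i, 1 ⊗ u i ⊗ v i ⊗ 1`: factors in positions 2, 3. -/
def tensor4_23 (K : Type*) {L I : Type*} [Field K] [LieRing L] [LieAlgebra K L]
    [Fintype I] (u v : I → L) :
    UniversalEnvelopingAlgebra K L ⊗[K] (UniversalEnvelopingAlgebra K L ⊗[K]
      (UniversalEnvelopingAlgebra K L ⊗[K] UniversalEnvelopingAlgebra K L)) :=
  ∑ i, (1 : UniversalEnvelopingAlgebra K L) ⊗ₜ[K]
        (UniversalEnvelopingAlgebra.ι K (u i) ⊗ₜ[K]
          (UniversalEnvelopingAlgebra.ι K (v i) ⊗ₜ[K] (1 : UniversalEnvelopingAlgebra K L)))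

/-- `Σ i, 1 ⊗ u i ⊗ 1 ⊗ v i`: factors in positions 2, 4. -/
def tensor4_24 (K : Type*) {L I : Type*} [Field K] [LieRing L] [LieAlgebra K L]
    [Fintype I] (u v : I → L) :
    UniversalEnvelopingAlgebra K L ⊗[K] (UniversalEnvelopingAlgebra K L ⊗[K]
      (UniversalEnvelopingAlgebra K L ⊗[K] UniversalEnvelopingAlgebra K L)) :=
  ∑ i, (1 : UniversalEnvelopingAlgebra K L) ⊗ₜ[K]
        (UniversalEnvelopingAlgebra.ι K (u i) ⊗ₜ[K]
          ((1 : UniversalEnvelopingAlgebra K L) ⊗ₜ[K] UniversalEnvelopingAlgebra.ι K (v i)))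

/-- `Σ i, 1 ⊗ 1 ⊗ u i ⊗ v i`: factors in positions 3, 4. -/
def tensor4_34 (K : Type*) {L I : Type*} [Field K] [LieRing L] [LieAlgebra K L]
    [Fintype I] (u v : I → L) :
    UniversalEnvelopingAlgebra K L ⊗[K] (UniversalEnvelopingAlgebra K L ⊗[K]
      (UniversalEnvelopingAlgebra K L ⊗[K] UniversalEnvelopingAlgebra K L)) :=
  ∑ i, (1 : UniversalEnvelopingAlgebra K L) ⊗ₜ[K]
        ((1 : UniversalEnvelopingAlgebra K L) ⊗ₜ[K]
          (UniversalEnvelopingAlgebra.ι K (u i) ⊗ₜ[K] UniversalEnvelopingAlgebra.ι K (v i)))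

end

/-! The Casimir tensor `C = ∑ eᵢ ⊗ eⁱ ∈ g ⊗ g` is `g`-invariant, by invariance of `B`; hence in
`U(g) ⊗ U(g)` it commutes with `Δ y = y ⊗ 1 + 1 ⊗ y` for every `y ∈ g`. Bracketing
`C₁₃ + C₁₄` (resp. `C₂₃ + C₂₄`) with a tensor living in the first two factors only touches
the first (resp. second) factor, so the result is a sum of terms `a ⊗ b ⊗ Δ eⁱ`, each of
which commutes with `C₃₄`. -/

section DualBasis

variable {K L I : Type*} [Field K] [LieRing L] [LieAlgebra K L] [Fintype I] [DecidableEq I]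
  {B : LinearMap.BilinForm K L} {e : Module.Basis I K L} {e' : I → L}

theorem sum_apply_dual_smul (hdual : ∀ i j, B (e i) (e' j) = if i = j then 1 else 0) (y : L) :
    ∑ j, B y (e' j) • e j = y := by
  have hrepr : ∀ j, B y (e' j) = e.repr y j := by
    intro j
    conv_lhs => rw [← e.sum_repr y]
    simp [-Module.Basis.sum_repr, hdual]
  simp only [hrepr, e.sum_repr]

theorem sum_apply_smul_dual (hB : B.SeparatingRight)
    (hdual : ∀ i j, B (e i) (e' j) = if i = j then 1 else 0) (y : L) :
    ∑ j, B (e j) y • e' j = y := by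
  rw [← sub_eq_zero]
  refine hB _ fun x => ?_
  rw [← sum_apply_dual_smul hdual x]
  simp [hdual, mul_comm]

theorem lie_casimir_eq_zero (hBinv : ∀ x y z, B ⁅x, y⁆ z = B x ⁅y, z⁆) (hB : B.SeparatingRight)
    (hdual : ∀ i j, B (e i) (e' j) = if i = j then 1 else 0) (x : L) :
    ⁅x, ∑ k, e k ⊗ₜ[K] e' k⁆ = 0 := by
  have hleft : ∑ k, ⁅x, e k⁆ ⊗ₜ[K] e' k = ∑ j, ∑ k, B ⁅x, e k⁆ (e' j) • (e j ⊗ₜ[K] e' k) := by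
    rw [Finset.sum_comm]
    refine Finset.sum_congr rfl fun k _ => ?_
    conv_lhs => rw [← sum_apply_dual_smul hdual ⁅x, e k⁆]
    simp only [TensorProduct.sum_tmul, TensorProduct.smul_tmul']
  have hright : ∑ j, e j ⊗ₜ[K] ⁅x, e' j⁆ = ∑ j, ∑ k, B (e k) ⁅x, e' j⁆ • (e j ⊗ₜ[K] e' k) := by
    refine Finset.sum_congr rfl fun j _ => ?_
    conv_lhs => rw [← sum_apply_smul_dual hB hdual ⁅x, e' j⁆]
    simp only [TensorProduct.tmul_sum, TensorProduct.tmul_smul]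
  have hskew : ∀ j k, B ⁅x, e k⁆ (e' j) = -B (e k) ⁅x, e' j⁆ := fun j k => by
    rw [← lie_skew, map_neg, LinearMap.neg_apply, hBinv]
  simp only [lie_sum, TensorProduct.LieModule.lie_tmul_right, Finset.sum_add_distrib, hleft,
    hright, hskew, neg_smul, Finset.sum_neg_distrib, neg_add_cancel]

end DualBasis

section TensorBracket

variable {K A B C : Type*} [CommRing K] [Ring A] [Algebra K A] [Ring B] [Algebra K B]
  [Ring C] [Algebra K C]

theorem tmul_one_lie_tmul (x a : A) (b : B) :
    ⁅x ⊗ₜ[K] (1 : B), a ⊗ₜ[K] b⁆ = ⁅x, a⁆ ⊗ₜ[K] b := by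
  simp [Ring.lie_def, TensorProduct.sub_tmul]

theorem one_tmul_lie_tmul (a : A) (x b : B) :
    ⁅(1 : A) ⊗ₜ[K] x, a ⊗ₜ[K] b⁆ = a ⊗ₜ[K] ⁅x, b⁆ := by
  simp [Ring.lie_def, TensorProduct.tmul_sub]

theorem tmul_tmul_lie_one_tmul_one_tmul (a : A) (b : B) (m n : C) :
    ⁅a ⊗ₜ[K] (b ⊗ₜ[K] m), (1 : A) ⊗ₜ[K] ((1 : B) ⊗ₜ[K] n)⁆ = a ⊗ₜ[K] (b ⊗ₜ[K] ⁅m, n⁆) := by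
  simp [Ring.lie_def, TensorProduct.tmul_sub]

theorem tmul_one_tmul_lie_tmul_tmul_one (x x' : A) (b : B) (m : C) :
    ⁅x ⊗ₜ[K] ((1 : B) ⊗ₜ[K] m), x' ⊗ₜ[K] (b ⊗ₜ[K] (1 : C))⁆ = ⁅x, x'⁆ ⊗ₜ[K] (b ⊗ₜ[K] m) := by
  simp [Ring.lie_def, TensorProduct.sub_tmul]

theorem one_tmul_tmul_lie_tmul_tmul_one (a : A) (x b : B) (m : C) :
    ⁅(1 : A) ⊗ₜ[K] (x ⊗ₜ[K] m), a ⊗ₜ[K] (b ⊗ₜ[K] (1 : C))⁆ = a ⊗ₜ[K] (⁅x, b⁆ ⊗ₜ[K] m) := by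
  simp [Ring.lie_def, TensorProduct.sub_tmul, TensorProduct.tmul_sub]

theorem lie_tmul_one_add_one_tmul_map {L : Type*} [LieRing L] [LieAlgebra K L]
    (f : L →ₗ[K] A) (hf : ∀ x y, f ⁅x, y⁆ = ⁅f x, f y⁆) (x : L) (t : L ⊗[K] L) :
    ⁅f x ⊗ₜ[K] (1 : A) + 1 ⊗ₜ[K] f x, TensorProduct.map f f t⁆ = TensorProduct.map f f ⁅x, t⁆ := by
  let _ := LieRing.ofAssociativeRing (A := A ⊗[K] A)
  induction t using TensorProduct.induction_on with
  | zero => simp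
  | tmul u v =>
    simp only [TensorProduct.map_tmul, add_lie, tmul_one_lie_tmul, one_tmul_lie_tmul,
      TensorProduct.LieModule.lie_tmul_right, map_add, hf]
  | add t t' ht ht' => rw [map_add, lie_add, ht, ht', lie_add, map_add]

end TensorBracket

section FourFold

open UniversalEnvelopingAlgebra

variable {K L I : Type*} [Field K] [LieRing L] [LieAlgebra K L] [Fintype I]

local notation "𝓤" => UniversalEnvelopingAlgebra K L

theorem lie_tensor4_13_add_tensor4_14_tensor4_12 (u v u' v' : I → L) :
    ⁅tensor4_13 K u v + tensor4_14 K u v, tensor4_12 K u' v'⁆ =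
      ∑ i, ∑ j, ⁅ι K (u i), ι K (u' j)⁆ ⊗ₜ[K]
        (ι K (v' j) ⊗ₜ[K] (ι K (v i) ⊗ₜ[K] (1 : 𝓤) + 1 ⊗ₜ[K] ι K (v i))) := by
  let _ := LieRing.ofAssociativeRing (A := 𝓤 ⊗[K] (𝓤 ⊗[K] (𝓤 ⊗[K] 𝓤)))
  simp only [tensor4_13, tensor4_14, tensor4_12, ← Finset.sum_add_distrib, sum_lie_sum, add_lie,
    ← Algebra.TensorProduct.one_def, tmul_one_tmul_lie_tmul_tmul_one, TensorProduct.tmul_add]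

theorem lie_tensor4_23_add_tensor4_24_tensor4_12 (u v u' v' : I → L) :
    ⁅tensor4_23 K u v + tensor4_24 K u v, tensor4_12 K u' v'⁆ =
      ∑ i, ∑ j, ι K (u' j) ⊗ₜ[K]
        (⁅ι K (u i), ι K (v' j)⁆ ⊗ₜ[K] (ι K (v i) ⊗ₜ[K] (1 : 𝓤) + 1 ⊗ₜ[K] ι K (v i))) := by
  let _ := LieRing.ofAssociativeRing (A := 𝓤 ⊗[K] (𝓤 ⊗[K] (𝓤 ⊗[K] 𝓤)))
  simp only [tensor4_23, tensor4_24, tensor4_12, ← Finset.sum_add_distrib, sum_lie_sum, add_lie,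
    ← Algebra.TensorProduct.one_def, one_tmul_tmul_lie_tmul_tmul_one, TensorProduct.tmul_add]

variable [DecidableEq I] {B : LinearMap.BilinForm K L} {e : Module.Basis I K L} {e' : I → L}

theorem tmul_tmul_primitive_lie_tensor4_34 (hBinv : ∀ x y z, B ⁅x, y⁆ z = B x ⁅y, z⁆)
    (hB : B.SeparatingRight) (hdual : ∀ i j, B (e i) (e' j) = if i = j then 1 else 0)
    (a b : 𝓤) (y : L) :
    ⁅a ⊗ₜ[K] (b ⊗ₜ[K] (ι K y ⊗ₜ[K] (1 : 𝓤) + 1 ⊗ₜ[K] ι K y)), tensor4_34 K e e'⁆ = 0 := by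
  let _ := LieRing.ofAssociativeRing (A := 𝓤)
  have hC : tensor4_34 K e e' = (1 : 𝓤) ⊗ₜ[K] ((1 : 𝓤) ⊗ₜ[K]
      TensorProduct.map (ι K).toLinearMap (ι K).toLinearMap (∑ k, e k ⊗ₜ[K] e' k)) := by
    simp [tensor4_34, TensorProduct.tmul_sum]
  rw [hC, tmul_tmul_lie_one_tmul_one_tmul, ← LieHom.coe_toLinearMap (ι K),
    lie_tmul_one_add_one_tmul_map _ (ι K).map_lie, lie_casimir_eq_zero hBinv hB hdual, map_zero,
    TensorProduct.tmul_zero, TensorProduct.tmul_zero]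

theorem lie_lie_tensor4_13_add_tensor4_14_tensor4_34 (hBinv : ∀ x y z, B ⁅x, y⁆ z = B x ⁅y, z⁆)
    (hB : B.SeparatingRight) (hdual : ∀ i j, B (e i) (e' j) = if i = j then 1 else 0)
    (u' v' : I → L) :
    ⁅⁅tensor4_13 K e e' + tensor4_14 K e e', tensor4_12 K u' v'⁆, tensor4_34 K e e'⁆ = 0 := by
  let _ := LieRing.ofAssociativeRing (A := 𝓤 ⊗[K] (𝓤 ⊗[K] (𝓤 ⊗[K] 𝓤)))
  simp only [lie_tensor4_13_add_tensor4_14_tensor4_12, sum_lie,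
    tmul_tmul_primitive_lie_tensor4_34 hBinv hB hdual, Finset.sum_const_zero]

theorem lie_lie_tensor4_23_add_tensor4_24_tensor4_34 (hBinv : ∀ x y z, B ⁅x, y⁆ z = B x ⁅y, z⁆)
    (hB : B.SeparatingRight) (hdual : ∀ i j, B (e i) (e' j) = if i = j then 1 else 0)
    (u' v' : I → L) :
    ⁅⁅tensor4_23 K e e' + tensor4_24 K e e', tensor4_12 K u' v'⁆, tensor4_34 K e e'⁆ = 0 := by
  let _ := LieRing.ofAssociativeRing (A := 𝓤 ⊗[K] (𝓤 ⊗[K] (𝓤 ⊗[K] 𝓤)))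
  simp only [lie_tensor4_23_add_tensor4_24_tensor4_12, sum_lie,
    tmul_tmul_primitive_lie_tensor4_34 hBinv hB hdual, Finset.sum_const_zero]

end FourFold

theorem four_fold_identity_CC_general
    {K L I : Type*} [Field K] [LieRing L] [LieAlgebra K L]
    [Fintype I] [DecidableEq I]
    (B : LinearMap.BilinForm K L)
    (hBinv : ∀ x y z, B ⁅x, y⁆ z = B x ⁅y, z⁆)
    (hBnd : B.Nondegenerate)
    (e : Module.Basis I K L) (e' : I → L)
    (hdual : ∀ i j, B (e i) (e' j) = if i = j then 1 else 0)
    (σ : L →ₗ[K] L) :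
    ⁅⁅tensor4_13 K (⇑e) e' + tensor4_14 K (⇑e) e',
        tensor4_12 K (fun i => σ (e i)) e'⁆, tensor4_34 K (⇑e) e'⁆ = 0 ∧
    ⁅⁅tensor4_23 K (⇑e) e' + tensor4_24 K (⇑e) e',
        tensor4_12 K (fun i => σ (e i)) e'⁆, tensor4_34 K (⇑e) e'⁆ = 0 :=
  ⟨lie_lie_tensor4_13_add_tensor4_14_tensor4_34 hBinv hBnd.2 hdual _ _,
    lie_lie_tensor4_23_add_tensor4_24_tensor4_34 hBinv hBnd.2 hdual _ _⟩

/-- In `U(g)^{⊗4}`: `[[C₁₃ + C₁₄, σ̂₁₂], C₃₄] = 0` and `[[C₂₃ + C₂₄, σ̂₁₂], C₃₄] = 0`. -/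
theorem four_fold_identity_CC
    {K L I : Type*} [Field K] [CharZero K] [LieRing L] [LieAlgebra K L]
    [Module.Finite K L] [Fintype I] [DecidableEq I]
    (B : LinearMap.BilinForm K L)
    (hBsymm : ∀ x y, B x y = B y x)
    (hBinv : ∀ x y z, B ⁅x, y⁆ z = B x ⁅y, z⁆)
    (hBnd : B.Nondegenerate)
    (e : Module.Basis I K L) (e' : I → L)
    (hdual : ∀ i j, B (e i) (e' j) = if i = j then 1 else 0)
    (σ : L →ₗ[K] L)
    (hσinv : ∀ x, σ (σ x) = x)
    (hσlie : ∀ x y, σ ⁅x, y⁆ = ⁅σ x, σ y⁆)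
    (hσB : ∀ x y, B (σ x) (σ y) = B x y) :
    ⁅⁅tensor4_13 K (⇑e) e' + tensor4_14 K (⇑e) e',
        tensor4_12 K (fun i => σ (e i)) e'⁆, tensor4_34 K (⇑e) e'⁆ = 0 ∧
    ⁅⁅tensor4_23 K (⇑e) e' + tensor4_24 K (⇑e) e',
        tensor4_12 K (fun i => σ (e i)) e'⁆, tensor4_34 K (⇑e) e'⁆ = 0 :=
  four_fold_identity_CC_general B hBinv hBnd e e' hdual σ
end

section
/- In U(g)^{⊗4}: [[C_{13} − C_{24}, σ̂_{12}], σ̂_{34}] = 0 and [[C_{14} − C_{23}, σ̂_{12}], σ̂_{34}] = 0. -/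
open scoped TensorProduct

noncomputable section

/-!
Write `a = σ̂₁₂`, `c = σ̂₃₄`. Invariance of `B` makes `C` invariant under `x ⊗ 1 + 1 ⊗ x`, hence
`σ̂ = (σ ⊗ 1) C` invariant under `x ⊗ 1 + 1 ⊗ σ x`. Letting `x` run through the basis and putting
the dual basis vector into a third tensor factor, `C₁₃ + σ̂₂₃` and `C₂₄ + σ̂₁₄` commute with `σ̂₁₂`,
while `C₁₃ + σ̂₁₄` and `C₂₄ + σ̂₂₃` commute with `σ̂₃₄` (self-adjointness of `σ` moves it between
the two factors of `σ̂`). So `A = C₁₃ − C₂₄` and `X = σ̂₁₄ − σ̂₂₃` satisfy `[A − X, a] = 0` and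
`[A + X, c] = 0`. As `a` and `c` commute, the Jacobi identity gives
`[[A, a], c] = [[X, a], c] = [[X, c], a] = −[[A, c], a] = −[[A, a], c]`, and characteristic zero
finishes. The second identity is the same with `A = C₁₄ − C₂₃` and `X = σ̂₁₃ − σ̂₂₄`.
-/

theorem lie_lie_eq_zero_of_lie_sub_eq_zero_of_lie_add_eq_zero {M : Type*} [LieRing M]
    [IsAddTorsionFree M] {A X a c : M} (hac : ⁅a, c⁆ = 0) (ha : ⁅A - X, a⁆ = 0)
    (hc : ⁅A + X, c⁆ = 0) : ⁅⁅A, a⁆, c⁆ = 0 := by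
  have swap (Y : M) : ⁅⁅Y, a⁆, c⁆ = ⁅⁅Y, c⁆, a⁆ := by
    rw [lie_lie, hac, lie_zero, zero_sub, lie_skew]
  rw [sub_lie, sub_eq_zero] at ha
  rw [add_lie, add_eq_zero_iff_eq_neg] at hc
  have h : ⁅⁅A, a⁆, c⁆ = -⁅⁅A, a⁆, c⁆ :=
    calc ⁅⁅A, a⁆, c⁆ = ⁅⁅X, c⁆, a⁆ := by rw [ha, swap]
      _ = -⁅⁅A, c⁆, a⁆ := by rw [hc, neg_lie, neg_neg]
      _ = -⁅⁅A, a⁆, c⁆ := by rw [swap]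
  rwa [eq_neg_iff_add_eq_zero, ← two_nsmul, two_nsmul_eq_zero] at h

theorem Ring.lie_add_mul_of_commute {A : Type*} [Ring A] {a b c d : A} (hac : Commute a c)
    (hdb : Commute d b) : ⁅a + d, b * c⁆ = ⁅a, b⁆ * c + b * ⁅d, c⁆ := by
  simp only [Ring.lie_def, add_mul, mul_add, sub_mul, mul_sub, ← mul_assoc, hdb.eq]
  rw [mul_assoc b c a, ← hac.eq, ← mul_assoc]
  abel

section DualBasis

variable {K L I : Type*} [Field K] [AddCommGroup L] [Module K L] [Fintype I] [DecidableEq I]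
  {B : LinearMap.BilinForm K L} {e : Module.Basis I K L} {e' : I → L}

theorem sum_bilin_dual_smul_basis (hdual : ∀ i j, B (e i) (e' j) = if i = j then 1 else 0)
    (x : L) : ∑ j, B x (e' j) • e j = x := by
  have hcoord (j : I) : B.flip (e' j) = e.coord j :=
    e.ext fun i => by simp [hdual, Finsupp.single_apply]
  simp_rw [← B.flip_apply, hcoord]
  exact e.sum_repr x

theorem sum_bilin_basis_smul_dual (hdual : ∀ i j, B (e i) (e' j) = if i = j then 1 else 0)
    (hB : B.Nondegenerate) (y : L) : ∑ j, B (e j) y • e' j = y := by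
  rw [← sub_eq_zero]
  refine hB.2 _ fun x => ?_
  suffices B.flip (∑ j, B (e j) y • e' j - y) = 0 from LinearMap.congr_fun this x
  exact e.ext fun i => by simp [hdual]

theorem sum_apply_basis_dual_eq {M : Type*} [AddCommGroup M] [Module K M]
    (hdual : ∀ i j, B (e i) (e' j) = if i = j then 1 else 0) (hB : B.Nondegenerate)
    (T : L →ₗ[K] L →ₗ[K] M) {f g : L → L} (hfg : ∀ x y, B (f x) y = B x (g y)) :
    ∑ i, T (f (e i)) (e' i) = ∑ i, T (e i) (g (e' i)) := by
  have lhs (i : I) : T (f (e i)) (e' i) = ∑ j, B (e i) (g (e' j)) • T (e j) (e' i) := by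
    conv_lhs => rw [← sum_bilin_dual_smul_basis hdual (f (e i))]
    simp [hfg]
  have rhs (j : I) : T (e j) (g (e' j)) = ∑ i, B (e i) (g (e' j)) • T (e j) (e' i) := by
    conv_lhs => rw [← sum_bilin_basis_smul_dual hdual hB (g (e' j))]
    simp
  simp_rw [lhs, rhs]
  exact Finset.sum_comm

theorem sum_basis_sigma_dual_eq {M : Type*} [AddCommGroup M] [Module K M]
    (hdual : ∀ i j, B (e i) (e' j) = if i = j then 1 else 0) (hB : B.Nondegenerate)
    {σ : L →ₗ[K] L} (hσinv : ∀ x, σ (σ x) = x) (hσB : ∀ x y, B (σ x) (σ y) = B x y)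
    (T : L →ₗ[K] L →ₗ[K] M) :
    ∑ i, T (e i) (σ (e' i)) = ∑ i, T (σ (e i)) (e' i) := by
  refine (sum_apply_basis_dual_eq hdual hB T fun x y => ?_).symm
  rw [← hσB, hσinv]

end DualBasis

section Invariance

variable {K L I M : Type*} [Field K] [LieRing L] [LieAlgebra K L] [Fintype I] [DecidableEq I]
  [AddCommGroup M] [Module K M] {B : LinearMap.BilinForm K L} {e : Module.Basis I K L}
  {e' : I → L}

theorem sum_lie_basis_add_lie_dual_eq_zero
    (hdual : ∀ i j, B (e i) (e' j) = if i = j then 1 else 0) (hB : B.Nondegenerate)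
    (hBinv : ∀ x y z, B ⁅x, y⁆ z = B x ⁅y, z⁆) (T : L →ₗ[K] L →ₗ[K] M) (y : L) :
    ∑ i, (T ⁅y, e i⁆ (e' i) + T (e i) ⁅y, e' i⁆) = 0 := by
  have hadj (x z : L) : B ⁅y, x⁆ z = B x (-⁅y, z⁆) := by
    rw [← lie_skew, LinearMap.map_neg₂, hBinv, map_neg]
  rw [Finset.sum_add_distrib, sum_apply_basis_dual_eq hdual hB T hadj, ← Finset.sum_add_distrib]
  simp only [map_neg, neg_add_cancel, Finset.sum_const_zero]

theorem sum_lie_sigma_basis_add_sigma_lie_dual_eq_zero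
    (hdual : ∀ i j, B (e i) (e' j) = if i = j then 1 else 0) (hB : B.Nondegenerate)
    (hBinv : ∀ x y z, B ⁅x, y⁆ z = B x ⁅y, z⁆) {σ : L →ₗ[K] L} (hσinv : ∀ x, σ (σ x) = x)
    (hσlie : ∀ x y, σ ⁅x, y⁆ = ⁅σ x, σ y⁆) (T : L →ₗ[K] L →ₗ[K] M) (x : L) :
    ∑ i, (T ⁅x, σ (e i)⁆ (e' i) + T (σ (e i)) ⁅σ x, e' i⁆) = 0 := by
  simpa [hσlie, hσinv] using sum_lie_basis_add_lie_dual_eq_zero hdual hB hBinv (T ∘ₗ σ) (σ x)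

end Invariance

section Placement

open UniversalEnvelopingAlgebra

attribute [local instance] LieRing.ofAssociativeRing

variable {K L I P A : Type*} [Field K] [LieRing L] [LieAlgebra K L] [Fintype I] [Ring A]
  [Algebra K A]

theorem AlgHom.map_ι_lie (f : UniversalEnvelopingAlgebra K L →ₐ[K] A) (x y : L) :
    f (ι K ⁅x, y⁆) = ⁅f (ι K x), f (ι K y)⁆ := by
  rw [LieHom.map_lie, LieRing.of_associative_ring_bracket, Ring.lie_def, map_sub, map_mul, map_mul]

variable (φ : P → UniversalEnvelopingAlgebra K L →ₐ[K] A)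

def placedSum (p q : P) (u v : I → L) : A :=
  ∑ i, φ p (ι K (u i)) * φ q (ι K (v i))

def placedBilin (p q : P) : L →ₗ[K] L →ₗ[K] A :=
  (LinearMap.mul K A).compl₁₂ ((φ p).toLinearMap ∘ₗ (ι K).toLinearMap)
    ((φ q).toLinearMap ∘ₗ (ι K).toLinearMap)

theorem placedBilin_apply (p q : P) (a b : L) :
    placedBilin φ p q a b = φ p (ι K a) * φ q (ι K b) := rfl

variable {φ}

theorem placedSum_comm {p q : P} (hpq : ∀ a b, Commute (φ p a) (φ q b)) (u v : I → L) :
    placedSum φ p q u v = placedSum φ q p v u :=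
  Finset.sum_congr rfl fun _ _ => (hpq _ _).eq

theorem commute_placedSum {p q r : P} (hrp : ∀ a b, Commute (φ r a) (φ p b))
    (hrq : ∀ a b, Commute (φ r a) (φ q b)) (a : UniversalEnvelopingAlgebra K L) (u v : I → L) :
    Commute (φ r a) (placedSum φ p q u v) :=
  Commute.sum_right _ _ _ fun _ _ => (hrp _ _).mul_right (hrq _ _)

theorem commute_placedSum_placedSum {p q r s : P} (hpr : ∀ a b, Commute (φ p a) (φ r b))
    (hps : ∀ a b, Commute (φ p a) (φ s b)) (hqr : ∀ a b, Commute (φ q a) (φ r b))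
    (hqs : ∀ a b, Commute (φ q a) (φ s b)) (u v u' v' : I → L) :
    Commute (placedSum φ p q u v) (placedSum φ r s u' v') :=
  Commute.sum_left _ _ _ fun _ _ =>
    (commute_placedSum hpr hps _ _ _).mul_left (commute_placedSum hqr hqs _ _ _)

theorem lie_add_placedSum {p q : P} (hpq : ∀ a b, Commute (φ p a) (φ q b)) (x y : L)
    (u v : I → L) :
    ⁅φ p (ι K x) + φ q (ι K y), placedSum φ p q u v⁆ =
      ∑ i, (placedBilin φ p q ⁅x, u i⁆ (v i) + placedBilin φ p q (u i) ⁅y, v i⁆) := by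
  rw [placedSum, Ring.lie_def, Finset.mul_sum, Finset.sum_mul, ← Finset.sum_sub_distrib]
  refine Finset.sum_congr rfl fun i _ => ?_
  rw [← Ring.lie_def, Ring.lie_add_mul_of_commute (hpq _ _) (hpq _ _).symm, placedBilin_apply,
    placedBilin_apply, AlgHom.map_ι_lie, AlgHom.map_ι_lie]

end Placement

section Casimir

open UniversalEnvelopingAlgebra

variable {K L I P A : Type*} [Field K] [LieRing L] [LieAlgebra K L] [Fintype I] [DecidableEq I]
  [Ring A] [Algebra K A] {φ : P → UniversalEnvelopingAlgebra K L →ₐ[K] A}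
  {B : LinearMap.BilinForm K L} {e : Module.Basis I K L} {e' : I → L} {σ : L →ₗ[K] L}
  {p q r : P}

theorem lie_placedSum_add_placedSum_sigma_eq_zero
    (hdual : ∀ i j, B (e i) (e' j) = if i = j then 1 else 0) (hB : B.Nondegenerate)
    (hBinv : ∀ x y z, B ⁅x, y⁆ z = B x ⁅y, z⁆) (hσinv : ∀ x, σ (σ x) = x)
    (hσlie : ∀ x y, σ ⁅x, y⁆ = ⁅σ x, σ y⁆) (hpq : ∀ a b, Commute (φ p a) (φ q b))
    (hrp : ∀ a b, Commute (φ r a) (φ p b)) (hrq : ∀ a b, Commute (φ r a) (φ q b))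
    (x w : I → L) :
    ⁅placedSum φ p r x w + placedSum φ q r (fun i => σ (x i)) w,
      placedSum φ p q (fun i => σ (e i)) e'⁆ = 0 := by
  have hinv (y : L) :
      ⁅φ p (ι K y) + φ q (ι K (σ y)), placedSum φ p q (fun i => σ (e i)) e'⁆ = 0 := by
    rw [lie_add_placedSum hpq]
    exact sum_lie_sigma_basis_add_sigma_lie_dual_eq_zero hdual hB hBinv hσinv hσlie _ y
  have hsplit : placedSum φ p r x w + placedSum φ q r (fun i => σ (x i)) w =
      ∑ i, (φ p (ι K (x i)) + φ q (ι K (σ (x i)))) * φ r (ι K (w i)) := by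
    simp only [placedSum, add_mul, Finset.sum_add_distrib]
  rw [hsplit]
  exact (Commute.sum_left _ _ _ fun i _ => (commute_iff_lie_eq.2 (hinv (x i))).mul_left
    (commute_placedSum hrp hrq _ _ _)).lie_eq

theorem lie_sigma_add_casimir_placedSum_eq_zero
    (hdual : ∀ i j, B (e i) (e' j) = if i = j then 1 else 0) (hB : B.Nondegenerate)
    (hBinv : ∀ x y z, B ⁅x, y⁆ z = B x ⁅y, z⁆) (hσinv : ∀ x, σ (σ x) = x)
    (hσlie : ∀ x y, σ ⁅x, y⁆ = ⁅σ x, σ y⁆) (hpq : ∀ a b, Commute (φ p a) (φ q b))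
    (hrp : ∀ a b, Commute (φ r a) (φ p b)) (hrq : ∀ a b, Commute (φ r a) (φ q b)) :
    ⁅placedSum φ p r (fun i => σ (e i)) e' + placedSum φ q r e e',
      placedSum φ p q (fun i => σ (e i)) e'⁆ = 0 := by
  simpa only [hσinv] using lie_placedSum_add_placedSum_sigma_eq_zero hdual hB hBinv hσinv hσlie
    hpq hrp hrq (fun i => σ (e i)) e'

theorem placedSum_basis_sigma_dual_eq
    (hdual : ∀ i j, B (e i) (e' j) = if i = j then 1 else 0) (hB : B.Nondegenerate)
    (hσinv : ∀ x, σ (σ x) = x) (hσB : ∀ x y, B (σ x) (σ y) = B x y) :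
    placedSum φ p q e (fun i => σ (e' i)) = placedSum φ p q (fun i => σ (e i)) e' :=
  sum_basis_sigma_dual_eq hdual hB hσinv hσB (placedBilin φ p q)

theorem lie_casimir_add_sigma_placedSum_left_eq_zero
    (hdual : ∀ i j, B (e i) (e' j) = if i = j then 1 else 0) (hB : B.Nondegenerate)
    (hBinv : ∀ x y z, B ⁅x, y⁆ z = B x ⁅y, z⁆) (hσinv : ∀ x, σ (σ x) = x)
    (hσlie : ∀ x y, σ ⁅x, y⁆ = ⁅σ x, σ y⁆) (hσB : ∀ x y, B (σ x) (σ y) = B x y)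
    (hpq : ∀ a b, Commute (φ p a) (φ q b)) (hrp : ∀ a b, Commute (φ r a) (φ p b))
    (hrq : ∀ a b, Commute (φ r a) (φ q b)) :
    ⁅placedSum φ r p e e' + placedSum φ r q (fun i => σ (e i)) e',
      placedSum φ p q (fun i => σ (e i)) e'⁆ = 0 := by
  rw [← placedSum_basis_sigma_dual_eq hdual hB hσinv hσB, placedSum_comm hrp, placedSum_comm hrq]
  exact lie_placedSum_add_placedSum_sigma_eq_zero hdual hB hBinv hσinv hσlie hpq hrp hrq e' e

theorem lie_sigma_add_casimir_placedSum_left_eq_zero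
    (hdual : ∀ i j, B (e i) (e' j) = if i = j then 1 else 0) (hB : B.Nondegenerate)
    (hBinv : ∀ x y z, B ⁅x, y⁆ z = B x ⁅y, z⁆) (hσinv : ∀ x, σ (σ x) = x)
    (hσlie : ∀ x y, σ ⁅x, y⁆ = ⁅σ x, σ y⁆) (hσB : ∀ x y, B (σ x) (σ y) = B x y)
    (hpq : ∀ a b, Commute (φ p a) (φ q b)) (hrp : ∀ a b, Commute (φ r a) (φ p b))
    (hrq : ∀ a b, Commute (φ r a) (φ q b)) :
    ⁅placedSum φ r p (fun i => σ (e i)) e' + placedSum φ r q e e',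
      placedSum φ p q (fun i => σ (e i)) e'⁆ = 0 := by
  rw [← placedSum_basis_sigma_dual_eq hdual hB hσinv hσB, placedSum_comm hrp, placedSum_comm hrq]
  simpa only [hσinv] using lie_placedSum_add_placedSum_sigma_eq_zero hdual hB hBinv hσinv hσlie
    hpq hrp hrq (fun i => σ (e' i)) e

end Casimir

section FourSlots

variable {K L I A : Type*} [Field K] [CharZero K] [LieRing L] [LieAlgebra K L] [Fintype I]
  [DecidableEq I] [Ring A] [Algebra K A] {φ : Fin 4 → UniversalEnvelopingAlgebra K L →ₐ[K] A}
  {B : LinearMap.BilinForm K L} {e : Module.Basis I K L} {e' : I → L} {σ : L →ₗ[K] L}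

-- Slots are numbered from `0`, so `placedSum φ 0 2 e e'` is the paper's `C₁₃`.
theorem lie_lie_casimir13_sub_casimir24_eq_zero
    (hφ : ∀ p q, p ≠ q → ∀ a b, Commute (φ p a) (φ q b))
    (hdual : ∀ i j, B (e i) (e' j) = if i = j then 1 else 0) (hB : B.Nondegenerate)
    (hBinv : ∀ x y z, B ⁅x, y⁆ z = B x ⁅y, z⁆) (hσinv : ∀ x, σ (σ x) = x)
    (hσlie : ∀ x y, σ ⁅x, y⁆ = ⁅σ x, σ y⁆) (hσB : ∀ x y, B (σ x) (σ y) = B x y) :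
    ⁅⁅placedSum φ 0 2 e e' - placedSum φ 1 3 e e', placedSum φ 0 1 (fun i => σ (e i)) e'⁆,
        placedSum φ 2 3 (fun i => σ (e i)) e'⁆ = 0 := by
  have := IsAddTorsionFree.of_isTorsionFree K A
  let _ : LieRing A := LieRing.ofAssociativeRing
  have h (p q : Fin 4) (hpq : p ≠ q := by decide) := hφ p q hpq
  refine lie_lie_eq_zero_of_lie_sub_eq_zero_of_lie_add_eq_zero
    (X := placedSum φ 0 3 (fun i => σ (e i)) e' - placedSum φ 1 2 (fun i => σ (e i)) e')
    (commute_placedSum_placedSum (h 0 2) (h 0 3) (h 1 2) (h 1 3) _ _ _ _).lie_eq ?_ ?_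
  · have := congrArg₂ (· - ·)
      (lie_placedSum_add_placedSum_sigma_eq_zero hdual hB hBinv hσinv hσlie (h 0 1) (h 2 0)
        (h 2 1) e e')
      (lie_sigma_add_casimir_placedSum_eq_zero hdual hB hBinv hσinv hσlie (h 0 1) (h 3 0) (h 3 1))
    rw [sub_self, ← sub_lie] at this
    convert this using 2
    abel
  · have := congrArg₂ (· - ·)
      (lie_casimir_add_sigma_placedSum_left_eq_zero hdual hB hBinv hσinv hσlie hσB (h 2 3)
        (h 0 2) (h 0 3))
      (lie_sigma_add_casimir_placedSum_left_eq_zero hdual hB hBinv hσinv hσlie hσB (h 2 3)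
        (h 1 2) (h 1 3))
    rw [sub_self, ← sub_lie] at this
    convert this using 2
    abel

theorem lie_lie_casimir14_sub_casimir23_eq_zero
    (hφ : ∀ p q, p ≠ q → ∀ a b, Commute (φ p a) (φ q b))
    (hdual : ∀ i j, B (e i) (e' j) = if i = j then 1 else 0) (hB : B.Nondegenerate)
    (hBinv : ∀ x y z, B ⁅x, y⁆ z = B x ⁅y, z⁆) (hσinv : ∀ x, σ (σ x) = x)
    (hσlie : ∀ x y, σ ⁅x, y⁆ = ⁅σ x, σ y⁆) (hσB : ∀ x y, B (σ x) (σ y) = B x y) :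
    ⁅⁅placedSum φ 0 3 e e' - placedSum φ 1 2 e e', placedSum φ 0 1 (fun i => σ (e i)) e'⁆,
        placedSum φ 2 3 (fun i => σ (e i)) e'⁆ = 0 := by
  have := IsAddTorsionFree.of_isTorsionFree K A
  let _ : LieRing A := LieRing.ofAssociativeRing
  have h (p q : Fin 4) (hpq : p ≠ q := by decide) := hφ p q hpq
  refine lie_lie_eq_zero_of_lie_sub_eq_zero_of_lie_add_eq_zero
    (X := placedSum φ 0 2 (fun i => σ (e i)) e' - placedSum φ 1 3 (fun i => σ (e i)) e')
    (commute_placedSum_placedSum (h 0 2) (h 0 3) (h 1 2) (h 1 3) _ _ _ _).lie_eq ?_ ?_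
  · have := congrArg₂ (· - ·)
      (lie_placedSum_add_placedSum_sigma_eq_zero hdual hB hBinv hσinv hσlie (h 0 1) (h 3 0)
        (h 3 1) e e')
      (lie_sigma_add_casimir_placedSum_eq_zero hdual hB hBinv hσinv hσlie (h 0 1) (h 2 0) (h 2 1))
    rw [sub_self, ← sub_lie] at this
    convert this using 2
    abel
  · have := congrArg₂ (· - ·)
      (lie_sigma_add_casimir_placedSum_left_eq_zero hdual hB hBinv hσinv hσlie hσB (h 2 3)
        (h 0 2) (h 0 3))
      (lie_casimir_add_sigma_placedSum_left_eq_zero hdual hB hBinv hσinv hσlie hσB (h 2 3)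
        (h 1 2) (h 1 3))
    rw [sub_self, ← sub_lie] at this
    convert this using 2
    abel

end FourSlots

section TensorSlots

open Algebra.TensorProduct

variable {K L I : Type*} [Field K] [LieRing L] [LieAlgebra K L] [Fintype I]

local notation "U" => UniversalEnvelopingAlgebra K L

def slot : Fin 4 → U →ₐ[K] U ⊗[K] (U ⊗[K] (U ⊗[K] U))
  | 0 => includeLeft
  | 1 => includeRight.comp includeLeft
  | 2 => includeRight.comp (includeRight.comp includeLeft)
  | 3 => includeRight.comp (includeRight.comp includeRight)

theorem commute_slot (p q : Fin 4) (hpq : p ≠ q) (a b : U) :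
    Commute (slot p a) (slot q b) := by
  fin_cases p <;> fin_cases q <;> simp_all [slot, Commute, SemiconjBy, tmul_mul_tmul]

theorem tensor4_12_eq (u v : I → L) : tensor4_12 K u v = placedSum slot 0 1 u v := by
  simp only [tensor4_12, placedSum, slot, AlgHom.comp_apply, includeLeft_apply,
    includeRight_apply, tmul_mul_tmul, mul_one, one_mul, ← one_def]

theorem tensor4_13_eq (u v : I → L) : tensor4_13 K u v = placedSum slot 0 2 u v := by
  simp only [tensor4_13, placedSum, slot, AlgHom.comp_apply, includeLeft_apply,
    includeRight_apply, tmul_mul_tmul, mul_one, one_mul]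

theorem tensor4_14_eq (u v : I → L) : tensor4_14 K u v = placedSum slot 0 3 u v := by
  simp only [tensor4_14, placedSum, slot, AlgHom.comp_apply, includeLeft_apply,
    includeRight_apply, tmul_mul_tmul, mul_one, one_mul]

theorem tensor4_23_eq (u v : I → L) : tensor4_23 K u v = placedSum slot 1 2 u v := by
  simp only [tensor4_23, placedSum, slot, AlgHom.comp_apply, includeLeft_apply,
    includeRight_apply, tmul_mul_tmul, mul_one, one_mul]

theorem tensor4_24_eq (u v : I → L) : tensor4_24 K u v = placedSum slot 1 3 u v := by
  simp only [tensor4_24, placedSum, slot, AlgHom.comp_apply, includeLeft_apply,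
    includeRight_apply, tmul_mul_tmul, mul_one, one_mul]

theorem tensor4_34_eq (u v : I → L) : tensor4_34 K u v = placedSum slot 2 3 u v := by
  simp only [tensor4_34, placedSum, slot, AlgHom.comp_apply, includeLeft_apply,
    includeRight_apply, tmul_mul_tmul, mul_one, one_mul]

end TensorSlots

theorem four_fold_identity_Csigma_general
    {K L I : Type*} [Field K] [CharZero K] [LieRing L] [LieAlgebra K L]
    [Fintype I] [DecidableEq I]
    (B : LinearMap.BilinForm K L)
    (hBinv : ∀ x y z, B ⁅x, y⁆ z = B x ⁅y, z⁆)
    (hBnd : B.Nondegenerate)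
    (e : Module.Basis I K L) (e' : I → L)
    (hdual : ∀ i j, B (e i) (e' j) = if i = j then 1 else 0)
    (σ : L →ₗ[K] L)
    (hσinv : ∀ x, σ (σ x) = x)
    (hσlie : ∀ x y, σ ⁅x, y⁆ = ⁅σ x, σ y⁆)
    (hσB : ∀ x y, B (σ x) (σ y) = B x y) :
    ⁅⁅tensor4_13 K (⇑e) e' - tensor4_24 K (⇑e) e',
        tensor4_12 K (fun i => σ (e i)) e'⁆, tensor4_34 K (fun i => σ (e i)) e'⁆ = 0 ∧
    ⁅⁅tensor4_14 K (⇑e) e' - tensor4_23 K (⇑e) e',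
        tensor4_12 K (fun i => σ (e i)) e'⁆, tensor4_34 K (fun i => σ (e i)) e'⁆ = 0 := by
  simp only [tensor4_12_eq, tensor4_13_eq, tensor4_14_eq, tensor4_23_eq, tensor4_24_eq,
    tensor4_34_eq]
  exact ⟨lie_lie_casimir13_sub_casimir24_eq_zero commute_slot hdual hBnd hBinv hσinv hσlie hσB,
    lie_lie_casimir14_sub_casimir23_eq_zero commute_slot hdual hBnd hBinv hσinv hσlie hσB⟩

/-- In `U(g)^{⊗4}`: `[[C₁₃ − C₂₄, σ̂₁₂], σ̂₃₄] = 0` and `[[C₁₄ − C₂₃, σ̂₁₂], σ̂₃₄] = 0`. -/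
theorem four_fold_identity_Csigma
    {K L I : Type*} [Field K] [CharZero K] [LieRing L] [LieAlgebra K L]
    [Module.Finite K L] [Fintype I] [DecidableEq I]
    (B : LinearMap.BilinForm K L)
    (hBsymm : ∀ x y, B x y = B y x)
    (hBinv : ∀ x y z, B ⁅x, y⁆ z = B x ⁅y, z⁆)
    (hBnd : B.Nondegenerate)
    (e : Module.Basis I K L) (e' : I → L)
    (hdual : ∀ i j, B (e i) (e' j) = if i = j then 1 else 0)
    (σ : L →ₗ[K] L)
    (hσinv : ∀ x, σ (σ x) = x)
    (hσlie : ∀ x y, σ ⁅x, y⁆ = ⁅σ x, σ y⁆)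
    (hσB : ∀ x y, B (σ x) (σ y) = B x y) :
    ⁅⁅tensor4_13 K (⇑e) e' - tensor4_24 K (⇑e) e',
        tensor4_12 K (fun i => σ (e i)) e'⁆, tensor4_34 K (fun i => σ (e i)) e'⁆ = 0 ∧
    ⁅⁅tensor4_14 K (⇑e) e' - tensor4_23 K (⇑e) e',
        tensor4_12 K (fun i => σ (e i)) e'⁆, tensor4_34 K (fun i => σ (e i)) e'⁆ = 0 :=
  four_fold_identity_Csigma_general B hBinv hBnd e e' hdual σ hσinv hσlie hσB
end
end

section
/- Let K be an infinite field and let a be a function assigning to each ordered pair (λ, μ) ∈ K × K with λ ≠ μ a nonzero element a(λ, μ) ∈ K, and suppose that a(λ,μ)·a(λ,ν) − a(λ,μ)·a(μ,ν) − a(λ,ν)·a(ν,μ) = 0 for all pairwise distinct λ, μ, ν ∈ K. Then there exist an injective function f : K → K and a nowhere-vanishing function g : K → K such that a(λ, μ) = g(μ)/(f(λ) − f(μ)) for all λ ≠ μ. -/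
/-!
Fix a base point `p`. For `l, m ≠ p` the equation at `(l, m, p)` reads
`a(l,m) (a(l,p) − a(m,p)) = a(l,p) a(p,m)`, which says exactly that
`a(l,m) (f l − f m) = g m` for `f = 1 / a(·,p)` and `g m = −a(p,m) / a(m,p)`.
Setting `f p = 0` and `g p = 1` makes this hold also when `l = p` or `m = p`.
Since `g` does not vanish, `f l ≠ f m` for `l ≠ m`, so `f` is injective.
-/

namespace FunctionalEquationA

variable {K : Type*} [Field K] [DecidableEq K] (a : K → K → K) (p : K)

def baseCoord (l : K) : K := if l = p then 0 else (a l p)⁻¹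

def baseWeight (m : K) : K := if m = p then 1 else -a p m / a m p

variable {a p}

theorem baseWeight_ne_zero (ha : ∀ l m : K, l ≠ m → a l m ≠ 0) (m : K) :
    baseWeight a p m ≠ 0 := by
  unfold baseWeight
  split_ifs with hm
  · exact one_ne_zero
  · exact div_ne_zero (neg_ne_zero.mpr (ha p m (Ne.symm hm))) (ha m p hm)

theorem mul_baseCoord_sub_eq_baseWeight (ha : ∀ l m : K, l ≠ m → a l m ≠ 0)
    (heq : ∀ l m n : K, l ≠ m → l ≠ n → m ≠ n →
      a l m * a l n - a l m * a m n - a l n * a n m = 0)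
    {l m : K} (hlm : l ≠ m) :
    a l m * (baseCoord a p l - baseCoord a p m) = baseWeight a p m := by
  unfold baseCoord baseWeight
  by_cases hl : l = p
  · subst hl
    simp only [if_pos, if_neg (Ne.symm hlm)]
    ring
  by_cases hm : m = p
  · subst hm
    rw [if_neg hl, if_pos rfl, if_pos rfl, sub_zero, mul_inv_cancel₀ (ha l m hl)]
  have hal := ha l p hl
  have ham := ha m p hm
  simp only [if_neg hl, if_neg hm]
  rw [inv_sub_inv hal ham, mul_div_assoc', div_eq_div_iff (mul_ne_zero hal ham) ham]
  linear_combination (-a m p) * heq l m p hlm hl hm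

theorem baseCoord_sub_ne_zero (ha : ∀ l m : K, l ≠ m → a l m ≠ 0)
    (heq : ∀ l m n : K, l ≠ m → l ≠ n → m ≠ n →
      a l m * a l n - a l m * a m n - a l n * a n m = 0)
    {l m : K} (hlm : l ≠ m) :
    baseCoord a p l - baseCoord a p m ≠ 0 := by
  intro h
  have key := mul_baseCoord_sub_eq_baseWeight (p := p) ha heq hlm
  rw [h, mul_zero] at key
  exact baseWeight_ne_zero ha m key.symm

end FunctionalEquationA

open FunctionalEquationA in
theorem functional_equation_a_general
    {K : Type*} [Field K]
    (a : K → K → K)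
    (ha : ∀ l m : K, l ≠ m → a l m ≠ 0)
    (heq : ∀ l m n : K, l ≠ m → l ≠ n → m ≠ n →
      a l m * a l n - a l m * a m n - a l n * a n m = 0) :
    ∃ f g : K → K, Function.Injective f ∧ (∀ x, g x ≠ 0) ∧
      ∀ l m : K, l ≠ m → a l m = g m / (f l - f m) := by
  classical
  refine ⟨baseCoord a 0, baseWeight a 0, fun l m hf => ?_, baseWeight_ne_zero ha,
    fun l m hlm => ?_⟩
  · by_contra hlm
    exact baseCoord_sub_ne_zero ha heq hlm (sub_eq_zero.mpr hf)
  · rw [eq_div_iff (baseCoord_sub_ne_zero ha heq hlm)]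
    exact mul_baseCoord_sub_eq_baseWeight ha heq hlm

/-- Let `K` be an infinite field and let `a` assign a nonzero value to each ordered pair of
distinct elements of `K`, satisfying
`a(λ,μ)a(λ,ν) − a(λ,μ)a(μ,ν) − a(λ,ν)a(ν,μ) = 0` for all pairwise distinct `λ, μ, ν`.
Then there are an injective `f : K → K` and a nowhere-vanishing `g : K → K` with
`a(λ,μ) = g(μ)/(f(λ) − f(μ))` for all `λ ≠ μ`. -/
theorem functional_equation_a
    {K : Type*} [Field K] [Infinite K]
    (a : K → K → K)
    (ha : ∀ l m : K, l ≠ m → a l m ≠ 0)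
    (heq : ∀ l m n : K, l ≠ m → l ≠ n → m ≠ n →
      a l m * a l n - a l m * a m n - a l n * a n m = 0) :
    ∃ f g : K → K, Function.Injective f ∧ (∀ x, g x ≠ 0) ∧
      ∀ l m : K, l ≠ m → a l m = g m / (f l - f m) :=
  functional_equation_a_general a ha heq
end

section
/- Let K be an infinite field of characteristic ≠ 2 and let a, b be functions assigning to each ordered pair (λ, μ) ∈ K × K with λ ≠ μ nonzero elements a(λ,μ), b(λ,μ) ∈ K, and suppose that for all pairwise distinct λ, μ, ν ∈ K: (1) a(λ,μ)a(λ,ν) − a(λ,μ)a(μ,ν) − a(λ,ν)a(ν,μ) = 0; (2) a(λ,μ)b(λ,ν) − a(λ,μ)b(μ,ν) − b(λ,ν)b(ν,μ) = 0; (3) a(λ,ν)b(λ,μ) − a(λ,ν)b(ν,μ) − b(λ,μ)b(μ,ν) = 0; (4) a(μ,ν)b(λ,μ) + a(ν,μ)b(λ,ν) − b(λ,μ)b(λ,ν) = 0. Then there exist an injective function f : K → K and a nowhere-vanishing function g : K → K such that either (ii) a(λ,μ) = b(λ,μ) = g(μ)/(f(λ) − f(μ)) for all λ ≠ μ, or (iii)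 f(λ) + f(μ) ≠ 0 for all λ ≠ μ and a(λ,μ) = g(μ)/(f(λ) − f(μ)), b(λ,μ) = −g(μ)/(f(λ) + f(μ)) for all λ ≠ μ. -/
/-!
Normalising equation (1) at a base point `o` (with `f(λ) = 1/a(λ,o)`) gives
`a(λ,μ) = g(μ)/(f(λ) - f(μ))` with `f` injective. Equation (4) then says that
`g(μ)/b(λ,μ) + f(μ)` does not depend on `μ`, so `b(λ,μ) = g(μ)/(h(λ) - f(μ))`.
In these coordinates equation (2) is affine in `(h(λ), f(λ))`; comparing two values of `λ`
yields `(h(ν) - f(μ))² = (h(μ) - f(ν))²`, so for each pair `μ ≠ ν` either `h + f` takes the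
same value or `h - f` takes opposite values. A three-point argument, using char ≠ 2 and
injectivity of `f`, makes the alternative global: either `h = f`, which is case (ii), or `h + f`
is a constant `2c`, and then `f - c` realises case (iii).
-/

namespace CYBE

variable {α K : Type*} [Field K]

theorem exists_eq_div_sub_of_eq1 [Nonempty α] {a : α → α → K}
    (ha : ∀ l m, l ≠ m → a l m ≠ 0)
    (heq1 : ∀ l m n, l ≠ m → l ≠ n → m ≠ n →
      a l m * a l n - a l m * a m n - a l n * a n m = 0) :
    ∃ F G : α → K, Function.Injective F ∧ (∀ x, G x ≠ 0) ∧
      ∀ l m, l ≠ m → a l m = G m / (F l - F m) := by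
  classical
  obtain ⟨o⟩ := ‹Nonempty α›
  let F : α → K := fun l => if l = o then 0 else (a l o)⁻¹
  let G : α → K := fun m => if m = o then 1 else -(a o m / a m o)
  have hG : ∀ x, G x ≠ 0 := by
    intro x
    by_cases hx : x = o
    · simp [G, hx]
    · simpa [G, hx] using div_ne_zero (ha o x (Ne.symm hx)) (ha x o hx)
  have ha_mul : ∀ l m, l ≠ m → a l m * (F l - F m) = G m := by
    intro l m hlm
    by_cases hm : m = o
    · subst hm
      simp [F, G, hlm, ha l m hlm]
    by_cases hl : l = o
    · subst hl
      have := ha m l hm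
      simp only [F, G, if_pos, if_neg hm]
      field_simp
      ring
    · have := ha l o hl
      have := ha m o hm
      simp only [F, G, if_neg hl, if_neg hm]
      field_simp
      linear_combination -heq1 l m o hlm hl hm
  have hF : Function.Injective F := fun l m hFlm => by
    by_contra hlm
    exact hG m (by rw [← ha_mul l m hlm, hFlm, sub_self, mul_zero])
  exact ⟨F, G, hF, hG, fun l m hlm =>
    (eq_div_iff (sub_ne_zero.2 (hF.ne hlm))).2 (ha_mul l m hlm)⟩

variable {F G H : α → K}

theorem exists_eq_div_of_eq4 [Nontrivial α] {a b : α → α → K}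
    (hF : Function.Injective F) (hG : ∀ x, G x ≠ 0)
    (haFG : ∀ l m, l ≠ m → a l m = G m / (F l - F m))
    (hb : ∀ l m, l ≠ m → b l m ≠ 0)
    (heq4 : ∀ l m n, l ≠ m → l ≠ n → m ≠ n →
      a m n * b l m + a n m * b l n - b l m * b l n = 0) :
    ∃ H : α → K, ∀ l m, l ≠ m → b l m = G m / (H l - F m) := by
  have hconst : ∀ l m n, l ≠ m → l ≠ n → m ≠ n →
      G m / b l m + F m = G n / b l n + F n := by
    intro l m n hlm hln hmn
    have h4 := heq4 l m n hlm hln hmn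
    rw [haFG m n hmn, haFG n m hmn.symm, ← neg_sub (F m), div_neg] at h4
    have hFmn := sub_ne_zero.2 (hF.ne hmn)
    have hbm := hb l m hlm
    have hbn := hb l n hln
    field_simp at h4
    rw [div_add' _ _ _ hbm, div_add' _ _ _ hbn, div_eq_div_iff hbm hbn]
    linear_combination -h4
  choose M hM using fun l : α => exists_ne l
  refine ⟨fun l => G (M l) / b l (M l) + F (M l), fun l m hlm => ?_⟩
  have hH : G m / b l m + F m = G (M l) / b l (M l) + F (M l) := by
    rcases eq_or_ne m (M l) with rfl | hm
    · rfl
    · exact hconst l m (M l) hlm (hM l).symm hm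
  dsimp only
  rw [← hH, add_sub_cancel_right, div_div_cancel₀ (hG m)]

theorem sub_mul_sub_eq_of_eq2 {a b : α → α → K}
    (hF : Function.Injective F) (hG : ∀ x, G x ≠ 0)
    (haFG : ∀ l m, l ≠ m → a l m = G m / (F l - F m))
    (hbHG : ∀ l m, l ≠ m → b l m = G m / (H l - F m))
    (hHF : ∀ l m, l ≠ m → H l - F m ≠ 0)
    {l m n : α} (hlm : l ≠ m) (hln : l ≠ n) (hmn : m ≠ n)
    (heq2 : a l m * b l n - a l m * b m n - b l n * b n m = 0) :
    (H m - H l) * (H n - F m) = (F l - F m) * (H m - F n) := by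
  rw [haFG l m hlm, hbHG l n hln, hbHG m n hmn, hbHG n m hmn.symm] at heq2
  have := sub_ne_zero.2 (hF.ne hlm)
  have := hHF l n hln
  have := hHF m n hmn
  have := hHF n m hmn.symm
  field_simp at heq2
  refine mul_left_cancel₀ (mul_ne_zero (hG m) (hG n)) ?_
  linear_combination heq2

theorem add_eq_or_sub_add_sub_eq_zero [Infinite α] (hF : Function.Injective F)
    (hrel : ∀ l m n, l ≠ m → l ≠ n → m ≠ n →
      (H m - H l) * (H n - F m) = (F l - F m) * (H m - F n))
    {m n : α} (hmn : m ≠ n) :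
    H m + F m = H n + F n ∨ H m - F m + (H n - F n) = 0 := by
  classical
  obtain ⟨l, hl⟩ := Infinite.exists_notMem_finset ({m, n} : Finset α)
  obtain ⟨l', hl'⟩ := Infinite.exists_notMem_finset ({m, n, l} : Finset α)
  simp only [Finset.mem_insert, Finset.mem_singleton, not_or] at hl hl'
  obtain ⟨hlm, hln⟩ := hl
  obtain ⟨hl'm, hl'n, hl'l⟩ := hl'
  have hmn' : (H l' - H l) * (H n - F m) = (F l - F l') * (H m - F n) := by
    linear_combination hrel l m n hlm hln hmn - hrel l' m n hl'm hl'n hmn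
  have hnm' : (H l' - H l) * (H m - F n) = (F l - F l') * (H n - F m) := by
    linear_combination hrel l n m hln hlm hmn.symm - hrel l' n m hl'n hl'm hmn.symm
  -- the two relations form a linear system in `(H l' - H l, F l - F l') ≠ 0`
  have hdet : (F l - F l') * ((H m + F m - (H n + F n)) * (H m - F m + (H n - F n))) = 0 := by
    linear_combination (H n - F m) * hnm' - (H m - F n) * hmn'
  rcases mul_eq_zero.1 hdet with h | h
  · exact absurd (sub_eq_zero.1 h) (hF.ne (Ne.symm hl'l))
  · exact (mul_eq_zero.1 h).imp_left sub_eq_zero.1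

theorem eq_or_exists_add_eq_const [Infinite α] (h2 : (2 : K) ≠ 0) (hF : Function.Injective F)
    (hpair : ∀ m n, m ≠ n → H m + F m = H n + F n ∨ H m - F m + (H n - F n) = 0) :
    H = F ∨ ∃ c, ∀ z, H z + F z = c := by
  classical
  have eq_of_add_sub : ∀ w y, H w + F w = H y + F y → H w - F w = H y - F y → w = y :=
    fun w y hS hD => hF (mul_left_cancel₀ h2 (by linear_combination hS - hD))
  refine or_iff_not_imp_left.2 fun hne => ?_
  obtain ⟨x, hx⟩ := Function.ne_iff.1 hne
  refine ⟨H x + F x, fun z => by_contra fun hz => ?_⟩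
  have hzx : z ≠ x := by rintro rfl; exact hz rfl
  have hDzx := (hpair z x hzx).resolve_left hz
  obtain ⟨w, hw⟩ := Infinite.exists_notMem_finset ({x, z} : Finset α)
  simp only [Finset.mem_insert, Finset.mem_singleton, not_or] at hw
  obtain ⟨hwx, hwz⟩ := hw
  rcases hpair w x hwx with hSwx | hDwx <;> rcases hpair w z hwz with hSwz | hDwz
  · exact hz (hSwz.symm.trans hSwx)
  · exact hwx (eq_of_add_sub w x hSwx (by linear_combination hDwz - hDzx))
  · exact hwz (eq_of_add_sub w z hSwz (by linear_combination hDwx - hDzx))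
  · exact hx (sub_eq_zero.1 ((mul_eq_zero.1 (by linear_combination hDwx - hDwz + hDzx :
      (2 : K) * (H x - F x) = 0)).resolve_left h2))

end CYBE

theorem classification_nonzero_b_general
    {K : Type*} [Field K] [Infinite K] (hchar : (2 : K) ≠ 0)
    (a b : K → K → K)
    (ha : ∀ l m : K, l ≠ m → a l m ≠ 0)
    (hb : ∀ l m : K, l ≠ m → b l m ≠ 0)
    (heq1 : ∀ l m n : K, l ≠ m → l ≠ n → m ≠ n →
      a l m * a l n - a l m * a m n - a l n * a n m = 0)
    (heq2 : ∀ l m n : K, l ≠ m → l ≠ n → m ≠ n →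
      a l m * b l n - a l m * b m n - b l n * b n m = 0)
    (heq4 : ∀ l m n : K, l ≠ m → l ≠ n → m ≠ n →
      a m n * b l m + a n m * b l n - b l m * b l n = 0) :
    ∃ f g : K → K, Function.Injective f ∧ (∀ x, g x ≠ 0) ∧
      ((∀ l m : K, l ≠ m →
          a l m = g m / (f l - f m) ∧ b l m = g m / (f l - f m)) ∨
       ((∀ l m : K, l ≠ m → f l + f m ≠ 0) ∧
        ∀ l m : K, l ≠ m →
          a l m = g m / (f l - f m) ∧ b l m = -(g m / (f l + f m)))) := by
  obtain ⟨F, G, hF, hG, haFG⟩ := CYBE.exists_eq_div_sub_of_eq1 ha heq1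
  obtain ⟨H, hbHG⟩ := CYBE.exists_eq_div_of_eq4 hF hG haFG hb heq4
  have hHF : ∀ l m, l ≠ m → H l - F m ≠ 0 := fun l m hlm h =>
    hb l m hlm (by rw [hbHG l m hlm, h, div_zero])
  have hrel := fun l m n hlm hln hmn =>
    CYBE.sub_mul_sub_eq_of_eq2 hF hG haFG hbHG hHF hlm hln hmn (heq2 l m n hlm hln hmn)
  have hpair := fun m n (hmn : m ≠ n) => CYBE.add_eq_or_sub_add_sub_eq_zero hF hrel hmn
  rcases CYBE.eq_or_exists_add_eq_const hchar hF hpair with rfl | ⟨c, hc⟩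
  · exact ⟨H, G, hF, hG, Or.inl fun l m hlm => ⟨haFG l m hlm, hbHG l m hlm⟩⟩
  obtain ⟨d, rfl⟩ : ∃ d, c = d + d := ⟨c / 2, by rw [← two_mul, mul_div_cancel₀ c hchar]⟩
  have hsum : ∀ l m, F l - d + (F m - d) = -(H l - F m) := fun l m => by
    linear_combination hc l
  refine ⟨fun l => F l - d, G, sub_left_injective.comp hF, hG,
    Or.inr ⟨fun l m hlm => ?_, fun l m hlm => ⟨?_, ?_⟩⟩⟩
  · rw [hsum]
    exact neg_ne_zero.2 (hHF l m hlm)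
  · rw [sub_sub_sub_cancel_right]
    exact haFG l m hlm
  · rw [hsum, div_neg, neg_neg]
    exact hbHG l m hlm

/-- Classification (Avan–Talon type): if `a` and `b` assign nonzero values to ordered pairs
of distinct elements of an infinite field `K` of characteristic ≠ 2 and satisfy the four
coefficient equations of the classical Yang–Baxter equation, then there are an injective
`f` and a nowhere-vanishing `g` such that either (ii) `a = b = g(μ)/(f(λ) − f(μ))`, or
(iii) `f(λ) + f(μ) ≠ 0` for `λ ≠ μ`, `a(λ,μ) = g(μ)/(f(λ) − f(μ))` and
`b(λ,μ) = −g(μ)/(f(λ) + f(μ))`. -/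
theorem classification_nonzero_b
    {K : Type*} [Field K] [Infinite K] (hchar : (2 : K) ≠ 0)
    (a b : K → K → K)
    (ha : ∀ l m : K, l ≠ m → a l m ≠ 0)
    (hb : ∀ l m : K, l ≠ m → b l m ≠ 0)
    (heq1 : ∀ l m n : K, l ≠ m → l ≠ n → m ≠ n →
      a l m * a l n - a l m * a m n - a l n * a n m = 0)
    (heq2 : ∀ l m n : K, l ≠ m → l ≠ n → m ≠ n →
      a l m * b l n - a l m * b m n - b l n * b n m = 0)
    (heq3 : ∀ l m n : K, l ≠ m → l ≠ n → m ≠ n →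
      a l n * b l m - a l n * b n m - b l m * b m n = 0)
    (heq4 : ∀ l m n : K, l ≠ m → l ≠ n → m ≠ n →
      a m n * b l m + a n m * b l n - b l m * b l n = 0) :
    ∃ f g : K → K, Function.Injective f ∧ (∀ x, g x ≠ 0) ∧
      ((∀ l m : K, l ≠ m →
          a l m = g m / (f l - f m) ∧ b l m = g m / (f l - f m)) ∨
       ((∀ l m : K, l ≠ m → f l + f m ≠ 0) ∧
        ∀ l m : K, l ≠ m →
          a l m = g m / (f l - f m) ∧ b l m = -(g m / (f l + f m)))) :=
  classification_nonzero_b_general hchar a b ha hb heq1 heq2 heq4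
end

section
/- Let K be an infinite field of characteristic ≠ 2, let a be a function assigning to each ordered pair (λ, μ) ∈ K × K with λ ≠ μ a nonzero element a(λ,μ) ∈ K, and let b be a function on the same set that is either identically zero or nowhere zero. Suppose a and b satisfy, for all pairwise distinct λ, μ, ν ∈ K: (1) a(λ,μ)a(λ,ν) − a(λ,μ)a(μ,ν) − a(λ,ν)a(ν,μ) = 0; (2) a(λ,μ)b(λ,ν) − a(λ,μ)b(μ,ν) − b(λ,ν)b(ν,μ) = 0; (3) a(λ,ν)b(λ,μ) − a(λ,ν)b(ν,μ) − b(λ,μ)b(μ,ν) = 0; (4) a(μ,ν)b(λ,μ) + a(ν,μ)b(λ,ν) − b(λ,μ)b(λ,ν) = 0; and suppose moreover that a and b are antisymmetric: a(μ,λ) = −a(λ,μ) and b(μ,λ) = −b(λ,μ) for all λ ≠ μ. Then there exist an injective function f : K → K and a nonzero constant c ∈ K such that a(λ,μ) = c/(f(λ) − f(μ)) for all λ ≠ μ, and either b is identically zero or b = a. -/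
/-- Antisymmetric case of the classification: if `a` is nonzero on distinct pairs, `b` is
either identically zero or nowhere zero on distinct pairs, both are antisymmetric, and they
satisfy the four coefficient equations, then `a(λ,μ) = c/(f(λ) − f(μ))` for an injective
`f` and a nonzero constant `c`, and either `b ≡ 0` or `b = a`. -/
theorem classification_antisymmetric_case
    {K : Type*} [Field K] [Infinite K] (hchar : (2 : K) ≠ 0)
    (a b : K → K → K)
    (ha : ∀ l m : K, l ≠ m → a l m ≠ 0)
    (hb : (∀ l m : K, l ≠ m → b l m = 0) ∨ (∀ l m : K, l ≠ m → b l m ≠ 0))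
    (haAnti : ∀ l m : K, l ≠ m → a m l = -a l m)
    (hbAnti : ∀ l m : K, l ≠ m → b m l = -b l m)
    (heq1 : ∀ l m n : K, l ≠ m → l ≠ n → m ≠ n →
      a l m * a l n - a l m * a m n - a l n * a n m = 0)
    (heq2 : ∀ l m n : K, l ≠ m → l ≠ n → m ≠ n →
      a l m * b l n - a l m * b m n - b l n * b n m = 0)
    (heq3 : ∀ l m n : K, l ≠ m → l ≠ n → m ≠ n →
      a l n * b l m - a l n * b n m - b l m * b m n = 0)
    (heq4 : ∀ l m n : K, l ≠ m → l ≠ n → m ≠ n →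
      a m n * b l m + a n m * b l n - b l m * b l n = 0) :
    ∃ (f : K → K) (c : K), Function.Injective f ∧ c ≠ 0 ∧
      (∀ l m : K, l ≠ m → a l m = c / (f l - f m)) ∧
      ((∀ l m : K, l ≠ m → b l m = 0) ∨ (∀ l m : K, l ≠ m → b l m = a l m)) := by
  classical
  have hne : Nonempty K := inferInstance
  obtain ⟨l₀⟩ := hne
  -- the cocycle identity for h = 1/a
  have hcoc : ∀ l m n : K, l ≠ m → l ≠ n → m ≠ n →
      (a l m)⁻¹ + (a m n)⁻¹ = (a l n)⁻¹ := by
    intro l m n hlm hln hmn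
    have h1 := heq1 l m n hlm hln hmn
    rw [haAnti m n hmn] at h1
    have hlm' := ha l m hlm
    have hln' := ha l n hln
    have hmn' := ha m n hmn
    field_simp
    linear_combination h1
  set f : K → K := fun l => if l = l₀ then 0 else (a l l₀)⁻¹ with hf
  have hkey : ∀ l m : K, l ≠ m → f l - f m = (a l m)⁻¹ := by
    intro l m hlm
    by_cases hl : l = l₀
    · subst hl
      have hm : m ≠ l := fun h => hlm h.symm
      simp only [hf, if_pos rfl, if_neg (show m ≠ l from hm)]
      rw [haAnti l m hlm, inv_neg]; ring
    · by_cases hm : m = l₀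
      · subst hm
        simp only [hf, if_neg hl, if_pos rfl, sub_zero]
      · simp only [hf, if_neg hl, if_neg hm]
        have h := hcoc l m l₀ hlm hl hm
        linear_combination -h
  have hinj : Function.Injective f := by
    intro l m h
    by_contra hlm
    have h' := hkey l m hlm
    rw [h, sub_self] at h'
    exact ha l m hlm (inv_eq_zero.mp h'.symm)
  refine ⟨f, 1, hinj, one_ne_zero, ?_, ?_⟩
  · intro l m hlm
    rw [hkey l m hlm, one_div, inv_inv]
  · rcases hb with hb0 | hbnz
    · exact Or.inl hb0
    · right
      -- d l m := (b l m)⁻¹ - (a l m)⁻¹ is independent of the second argument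
      have hindep : ∀ l m n : K, l ≠ m → l ≠ n → m ≠ n →
          (b l m)⁻¹ - (a l m)⁻¹ = (b l n)⁻¹ - (a l n)⁻¹ := by
        intro l m n hlm hln hmn
        have h4 := heq4 l m n hlm hln hmn
        rw [haAnti m n hmn] at h4
        have hbm := hbnz l m hlm
        have hbn := hbnz l n hln
        have hamn := ha m n hmn
        have hc := hcoc l m n hlm hln hmn
        have hstep : (b l n)⁻¹ - (b l m)⁻¹ = (a m n)⁻¹ := by
          field_simp
          linear_combination h4
        linear_combination -hstep - hc
      have hanti : ∀ l m : K, l ≠ m →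
          (b m l)⁻¹ - (a m l)⁻¹ = -((b l m)⁻¹ - (a l m)⁻¹) := by
        intro l m hlm
        rw [haAnti l m hlm, hbAnti l m hlm, inv_neg, inv_neg]
        ring
      intro l m hlm
      obtain ⟨n, hn⟩ := Infinite.exists_notMem_finset ({l, m} : Finset K)
      simp only [Finset.mem_insert, Finset.mem_singleton, not_or] at hn
      obtain ⟨hnl, hnm⟩ := hn
      have hln : l ≠ n := fun h => hnl h.symm
      have hmn : m ≠ n := fun h => hnm h.symm
      have e2 := hindep m l n hlm.symm hmn hln
      have e4 := hindep n m l hmn.symm hln.symm hlm.symm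
      have e6 := hindep l n m hln hlm hmn.symm
      have h2 : 2 * ((b l m)⁻¹ - (a l m)⁻¹) = 0 := by
        linear_combination (hanti l m hlm) - e2 - (hanti m n hmn) + e4 +
          (hanti n l hln.symm) - e6
      have hzero : (b l m)⁻¹ - (a l m)⁻¹ = 0 := by
        rcases mul_eq_zero.mp h2 with h | h
        · exact absurd h hchar
        · exact h
      have hba : (b l m)⁻¹ = (a l m)⁻¹ := by linear_combination hzero
      exact inv_injective hba
end

section
/- There exist no ε₁, ε₂ ∈ {0, 1} and non-constant rational functions f, φ ∈ ℝ(T) such that, in the field ℝ(X, Y) of rational functions in two variables, ε₁·(f(X) − f(Y))⁻¹ + ε₂·(φ(X) − φ(Y))⁻¹ = −(X − Y)⁻¹·( 2X²/(1 − X²) + 2Y²/(1 − Y²) ), where f(X), f(Y) (respectively φ(X), φ(Y)) denote the images of f (respectively φ) under the field embeddings ℝ(T) → ℝ(X,Y) sending T to X and T to Y; note that f(X) − f(Y) ≠ 0 and φ(X) − φ(Y) ≠ 0 in ℝ(X,Y) since f and φ are non-constant. -/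
open Polynomial

noncomputable section NoGoAux

abbrev NGP := MvPolynomial (Fin 2) ℝ
abbrev NGK := FractionRing NGP

def NGa : NGP →+* NGK := algebraMap _ _
def NGX : ℝ[X] →+* NGP := Polynomial.eval₂RingHom MvPolynomial.C (MvPolynomial.X 0)
def NGY : ℝ[X] →+* NGP := Polynomial.eval₂RingHom MvPolynomial.C (MvPolynomial.X 1)
/-- evaluation X := 1, Y := T -/
def NGev : NGP →+* ℝ[X] :=
  MvPolynomial.eval₂Hom Polynomial.C (fun i => if i = 0 then 1 else Polynomial.X)
/-- evaluation X := T, Y := 0 -/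
def NGev2 : NGP →+* ℝ[X] :=
  MvPolynomial.eval₂Hom Polynomial.C (fun i => if i = 0 then Polynomial.X else 0)

lemma NGev_NGX (p : ℝ[X]) : NGev (NGX p) = Polynomial.C (p.eval 1) := by
  have : NGev.comp NGX = Polynomial.C.comp (Polynomial.evalRingHom 1) := by
    apply Polynomial.ringHom_ext <;> simp [NGev, NGX]
  exact RingHom.congr_fun this p

lemma NGev_NGY (p : ℝ[X]) : NGev (NGY p) = p := by
  have : NGev.comp NGY = RingHom.id ℝ[X] := by
    apply Polynomial.ringHom_ext <;> simp [NGev, NGY]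
  exact RingHom.congr_fun this p

lemma NGev2_NGX (p : ℝ[X]) : NGev2 (NGX p) = p := by
  have : NGev2.comp NGX = RingHom.id ℝ[X] := by
    apply Polynomial.ringHom_ext <;> simp [NGev2, NGX]
  exact RingHom.congr_fun this p

lemma NGX_ne_zero {p : ℝ[X]} (hp : p ≠ 0) : NGX p ≠ 0 := by
  intro h; exact hp (by simpa [NGev2_NGX] using congrArg NGev2 h)

lemma NGY_ne_zero {p : ℝ[X]} (hp : p ≠ 0) : NGY p ≠ 0 := by
  intro h; exact hp (by simpa [NGev_NGY] using congrArg NGev h)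

lemma NGev_X0 : NGev (MvPolynomial.X 0) = 1 := by simp [NGev]
lemma NGev_X1 : NGev (MvPolynomial.X 1) = Polynomial.X := by simp [NGev]
lemma NGev_C (r : ℝ) : NGev (MvPolynomial.C r) = Polynomial.C r := by simp [NGev]

lemma NGa_ne_zero {p : NGP} (hp : p ≠ 0) : NGa p ≠ 0 := by
  intro h
  exact hp (IsFractionRing.injective NGP NGK (by rw [map_zero]; exact h))

lemma nonconst_aux (f : RatFunc ℝ) (hf : ∀ c : ℝ, f ≠ RatFunc.C c) :
    Polynomial.C (Polynomial.eval 1 f.num) * f.denom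
      - f.num * Polynomial.C (Polynomial.eval 1 f.denom) ≠ 0 := by
  intro h
  have h' : Polynomial.C (Polynomial.eval 1 f.num) * f.denom
      = f.num * Polynomial.C (Polynomial.eval 1 f.denom) := sub_eq_zero.mp h
  by_cases hq : Polynomial.eval 1 f.denom = 0
  · rw [hq, map_zero, mul_zero] at h'
    have hp : Polynomial.eval 1 f.num = 0 := by
      rcases mul_eq_zero.mp h' with h1 | h1
      · exact Polynomial.C_eq_zero.mp h1
      · exact absurd h1 (RatFunc.denom_ne_zero f)
    obtain ⟨u, v, huv⟩ := RatFunc.isCoprime_num_denom f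
    have := congrArg (Polynomial.eval 1) huv
    simp [hp, hq] at this
  · apply hf (Polynomial.eval 1 f.num / Polynomial.eval 1 f.denom)
    have hC : (RatFunc.C (Polynomial.eval 1 f.denom) : RatFunc ℝ) ≠ 0 := by
      simpa using (RingHom.injective (RatFunc.C : ℝ →+* RatFunc ℝ)).ne_iff.mpr hq
    have hd : (algebraMap ℝ[X] (RatFunc ℝ)) f.denom ≠ 0 :=
      RatFunc.algebraMap_ne_zero (RatFunc.denom_ne_zero f)
    have hmul := div_mul_cancel₀ (algebraMap ℝ[X] (RatFunc ℝ) f.num) hd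
    rw [RatFunc.num_div_denom f] at hmul
    have h2 : f * RatFunc.C (Polynomial.eval 1 f.denom)
        = RatFunc.C (Polynomial.eval 1 f.num) := by
      have hmap := congrArg (algebraMap ℝ[X] (RatFunc ℝ)) h'
      rw [map_mul, map_mul, RatFunc.algebraMap_C, RatFunc.algebraMap_C] at hmap
      apply mul_right_cancel₀ hd
      rw [mul_right_comm, hmul]
      linear_combination -hmap
    rw [map_div₀, eq_div_iff hC]
    exact h2

end NoGoAux

set_option maxHeartbeats 2000000 in
/-- The no-go consistency condition.  Let `ℝ(T) = RatFunc ℝ` and let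
`ℝ(X,Y) = FractionRing (MvPolynomial (Fin 2) ℝ)`, with `iX, iY : ℝ(T) → ℝ(X,Y)` the field
embeddings over `ℝ` sending `T` to `X` and to `Y`, respectively.  Then there exist no
`ε₁, ε₂ ∈ {0,1}` and non-constant rational functions `f, φ ∈ ℝ(T)` such that
`ε₁·(f(X) − f(Y))⁻¹ + ε₂·(φ(X) − φ(Y))⁻¹
  = −(X − Y)⁻¹·( 2X²/(1 − X²) + 2Y²/(1 − Y²) )` in `ℝ(X,Y)`. -/
theorem no_go_consistency_condition
    (iX iY : RatFunc ℝ →+* FractionRing (MvPolynomial (Fin 2) ℝ))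
    (hiXC : ∀ r : ℝ, iX (RatFunc.C r)
      = algebraMap (MvPolynomial (Fin 2) ℝ) (FractionRing (MvPolynomial (Fin 2) ℝ))
          (MvPolynomial.C r))
    (hiYC : ∀ r : ℝ, iY (RatFunc.C r)
      = algebraMap (MvPolynomial (Fin 2) ℝ) (FractionRing (MvPolynomial (Fin 2) ℝ))
          (MvPolynomial.C r))
    (hiX : iX RatFunc.X
      = algebraMap (MvPolynomial (Fin 2) ℝ) (FractionRing (MvPolynomial (Fin 2) ℝ))
          (MvPolynomial.X 0))
    (hiY : iY RatFunc.X
      = algebraMap (MvPolynomial (Fin 2) ℝ) (FractionRing (MvPolynomial (Fin 2) ℝ))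
          (MvPolynomial.X 1)) :
    ¬ ∃ (ε₁ ε₂ : ℝ) (f φ : RatFunc ℝ),
        (ε₁ = 0 ∨ ε₁ = 1) ∧ (ε₂ = 0 ∨ ε₂ = 1) ∧
        (∀ c : ℝ, f ≠ RatFunc.C c) ∧ (∀ c : ℝ, φ ≠ RatFunc.C c) ∧
        iX (RatFunc.C ε₁) * (iX f - iY f)⁻¹ + iX (RatFunc.C ε₂) * (iX φ - iY φ)⁻¹
          = -(iX RatFunc.X - iY RatFunc.X)⁻¹ *
              (2 * iX RatFunc.X ^ 2 / (1 - iX RatFunc.X ^ 2)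
                + 2 * iY RatFunc.X ^ 2 / (1 - iY RatFunc.X ^ 2)) := by
  rintro ⟨ε₁, ε₂, f, g, -, -, hf, hg, heq⟩
  have hXalg : ∀ p : ℝ[X], iX (algebraMap ℝ[X] (RatFunc ℝ) p) = NGa (NGX p) := by
    intro p
    have h : iX.comp (algebraMap ℝ[X] (RatFunc ℝ)) = NGa.comp NGX := by
      apply Polynomial.ringHom_ext
      · intro r; simp [RatFunc.algebraMap_C, hiXC r, NGa, NGX]
      · simp [RatFunc.algebraMap_X, hiX, NGa, NGX]
    exact RingHom.congr_fun h p
  have hYalg : ∀ p : ℝ[X], iY (algebraMap ℝ[X] (RatFunc ℝ) p) = NGa (NGY p) := by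
    intro p
    have h : iY.comp (algebraMap ℝ[X] (RatFunc ℝ)) = NGa.comp NGY := by
      apply Polynomial.ringHom_ext
      · intro r; simp [RatFunc.algebraMap_C, hiYC r, NGa, NGY]
      · simp [RatFunc.algebraMap_X, hiY, NGa, NGY]
    exact RingHom.congr_fun h p
  have hfX : iX f = NGa (NGX f.num) / NGa (NGX f.denom) := by
    conv_lhs => rw [← RatFunc.num_div_denom f]
    rw [map_div₀, hXalg, hXalg]
  have hfY : iY f = NGa (NGY f.num) / NGa (NGY f.denom) := by
    conv_lhs => rw [← RatFunc.num_div_denom f]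
    rw [map_div₀, hYalg, hYalg]
  have hgX : iX g = NGa (NGX g.num) / NGa (NGX g.denom) := by
    conv_lhs => rw [← RatFunc.num_div_denom g]
    rw [map_div₀, hXalg, hXalg]
  have hgY : iY g = NGa (NGY g.num) / NGa (NGY g.denom) := by
    conv_lhs => rw [← RatFunc.num_div_denom g]
    rw [map_div₀, hYalg, hYalg]
  set A : NGP := NGX f.num * NGY f.denom - NGY f.num * NGX f.denom with hA
  set B : NGP := NGX g.num * NGY g.denom - NGY g.num * NGX g.denom with hB
  have hevA : NGev A ≠ 0 := by
    have h := nonconst_aux f hf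
    simpa [hA, map_sub, map_mul, NGev_NGX, NGev_NGY] using h
  have hevB : NGev B ≠ 0 := by
    have h := nonconst_aux g hg
    simpa [hB, map_sub, map_mul, NGev_NGX, NGev_NGY] using h
  have hAne : A ≠ 0 := fun h => hevA (by rw [h, map_zero])
  have hBne : B ≠ 0 := fun h => hevB (by rw [h, map_zero])
  have haA : NGa A ≠ 0 := NGa_ne_zero hAne
  have haB : NGa B ≠ 0 := NGa_ne_zero hBne
  have hd1x : NGa (NGX f.denom) ≠ 0 := NGa_ne_zero (NGX_ne_zero (RatFunc.denom_ne_zero f))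
  have hd1y : NGa (NGY f.denom) ≠ 0 := NGa_ne_zero (NGY_ne_zero (RatFunc.denom_ne_zero f))
  have hd2x : NGa (NGX g.denom) ≠ 0 := NGa_ne_zero (NGX_ne_zero (RatFunc.denom_ne_zero g))
  have hd2y : NGa (NGY g.denom) ≠ 0 := NGa_ne_zero (NGY_ne_zero (RatFunc.denom_ne_zero g))
  have hone : (1 - Polynomial.X ^ 2 : ℝ[X]) ≠ 0 := by
    intro h
    have := congrArg (Polynomial.eval 0) h
    simp at this
  have hxyP : (MvPolynomial.X 0 - MvPolynomial.X 1 : NGP) ≠ 0 := by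
    intro h
    have h2 := congrArg NGev h
    simp only [map_sub, map_zero, NGev, MvPolynomial.eval₂Hom_X'] at h2
    have := congrArg (Polynomial.eval 0) h2
    simp at this
  have h1xP : ((1 : NGP) - MvPolynomial.X 0 ^ 2) ≠ 0 := by
    intro h
    have h2 := congrArg NGev2 h
    simp only [map_sub, map_zero, map_one, map_pow, NGev2, MvPolynomial.eval₂Hom_X'] at h2
    exact hone (by simpa using h2)
  have h1yP : ((1 : NGP) - MvPolynomial.X 1 ^ 2) ≠ 0 := by
    intro h
    have h2 := congrArg NGev h
    simp only [map_sub, map_zero, map_one, map_pow, NGev, MvPolynomial.eval₂Hom_X'] at h2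
    exact hone (by simpa using h2)
  have hxyK : NGa (MvPolynomial.X 0) - NGa (MvPolynomial.X 1) ≠ 0 := by
    rw [← map_sub]; exact NGa_ne_zero hxyP
  have h1xK : (1 : NGK) - NGa (MvPolynomial.X 0) ^ 2 ≠ 0 := by
    rw [← map_one NGa, ← map_pow, ← map_sub]; exact NGa_ne_zero h1xP
  have h1yK : (1 : NGK) - NGa (MvPolynomial.X 1) ^ 2 ≠ 0 := by
    rw [← map_one NGa, ← map_pow, ← map_sub]; exact NGa_ne_zero h1yP
  have hdiffA : NGa (NGX f.num) / NGa (NGX f.denom) - NGa (NGY f.num) / NGa (NGY f.denom)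
      = NGa A / (NGa (NGX f.denom) * NGa (NGY f.denom)) := by
    rw [hA, map_sub, map_mul, map_mul]
    field_simp
  have hdiffB : NGa (NGX g.num) / NGa (NGX g.denom) - NGa (NGY g.num) / NGa (NGY g.denom)
      = NGa B / (NGa (NGX g.denom) * NGa (NGY g.denom)) := by
    rw [hB, map_sub, map_mul, map_mul]
    field_simp
  rw [hfX, hfY, hgX, hgY, hiX, hiY, hiXC ε₁, hiXC ε₂, hdiffA, hdiffB] at heq
  rw [inv_div, inv_div] at heq
  have hNG : (algebraMap (MvPolynomial (Fin 2) ℝ) (FractionRing (MvPolynomial (Fin 2) ℝ))) = NGa :=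
    rfl
  rw [hNG] at heq
  have key : (MvPolynomial.C ε₁ * (NGX f.denom * NGY f.denom) * B
      + MvPolynomial.C ε₂ * (NGX g.denom * NGY g.denom) * A)
      * ((MvPolynomial.X 0 - MvPolynomial.X 1) * (1 - MvPolynomial.X 0 ^ 2)
          * (1 - MvPolynomial.X 1 ^ 2))
      + A * B * (2 * MvPolynomial.X 0 ^ 2 * (1 - MvPolynomial.X 1 ^ 2)
        + 2 * MvPolynomial.X 1 ^ 2 * (1 - MvPolynomial.X 0 ^ 2)) = 0 := by
    apply IsFractionRing.injective NGP NGK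
    rw [map_zero]
    field_simp [haA, haB, hxyK, h1xK, h1yK] at heq
    simp only [map_add, map_mul, map_sub, map_pow, map_one, map_ofNat]
    rw [hNG]
    linear_combination heq
  have hkey := congrArg NGev key
  rw [map_zero] at hkey
  simp only [map_add, map_mul, map_sub, map_pow, map_one, map_ofNat, NGev_X0, NGev_X1,
    NGev_C] at hkey
  have hfin : NGev A * NGev B * (2 * (1 - Polynomial.X ^ 2)) = 0 := by
    linear_combination hkey
  exact (mul_ne_zero (mul_ne_zero hevA hevB)
    (mul_ne_zero two_ne_zero hone)) hfin
end
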